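/- arXiv:2007.12832 — 9 statements merged into one kernel-verified Lean document; each statement's English description precedes it below -/
import Mathlib

section
/- Absence of embedded eigenvalues: let λ ∈ ℝ satisfy |cos λ| < ρ_∞. If u : ℤ → ℂ² is square-summable, i.e. ∑_{x∈ℤ} ‖u(x)‖² < ∞, and satisfies the eigenvalue equation (Uu)(x) = e^{iλ} u(x) for all x ∈ ℤ, then u(x) = 0 for all x ∈ ℤ. -/
/-!
Write `e^{iλ} = c + i s` and `a x = u₁ x`, `b x = u₂ (x - 1)`. The eigenvalue equation becomes a
first-order recursion `(a, b) x ↦ (a, b) (x + 1)` whose transfer matrix has determinant one and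
trace `2c / ρ x`. Since `c² < ρ∞²`, it is elliptic for large `x`: with `g = √(s² - |α x|²)` the
two coordinates `I (s ∓ g) a - conj α b` are multiplied by the unimodular numbers `(c ± i g) / ρ`.
Their norms are thus conserved up to the variation of `α`, so their sum `T` satisfies
`T x ≤ (1 + K ‖α (x + 1) - α x‖) T (x + 1)`. As the variation is summable, `T x ≤ C T y` for all
`y ≥ x`, and `T y → 0` by square summability, so `T`, hence `(a, b)`, vanishes near `+∞`.
The recursion can be run backwards, so `u = 0`.
-/

open Complex Filter ComplexConjugate Topology

theorem Summable.tendsto_cofinite_zero_of_norm_sq {ι E : Type*} [SeminormedAddCommGroup E]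
    {f : ι → E} (h : Summable fun i => ‖f i‖ ^ 2) : Tendsto f cofinite (𝓝 0) := by
  rw [tendsto_zero_iff_norm_tendsto_zero]
  simpa using h.tendsto_cofinite_zero.sqrt

theorem eq_zero_of_le_one_add_mul_succ {R d : ℕ → ℝ} (hR : ∀ n, 0 ≤ R n) (hd : ∀ n, 0 ≤ d n)
    (hds : Summable d) (hstep : ∀ n, R n ≤ (1 + d n) * R (n + 1))
    (hlim : Tendsto R atTop (𝓝 0)) : R 0 = 0 := by
  have hpartial : ∀ n, R 0 ≤ Real.exp (∑ j ∈ Finset.range n, d j) * R n := by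
    intro n
    induction n with
    | zero => simp
    | succ n ih =>
      calc R 0 ≤ Real.exp (∑ j ∈ Finset.range n, d j) * ((1 + d n) * R (n + 1)) :=
            ih.trans (by gcongr; exact hstep n)
        _ ≤ Real.exp (∑ j ∈ Finset.range n, d j) * (Real.exp (d n) * R (n + 1)) := by
            gcongr
            · exact hR _
            · linarith [Real.add_one_le_exp (d n)]
        _ = Real.exp (∑ j ∈ Finset.range (n + 1), d j) * R (n + 1) := by
            rw [Finset.sum_range_succ, Real.exp_add, mul_assoc]
  have hbound : ∀ n, R 0 ≤ Real.exp (∑' j, d j) * R n := fun n =>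
    (hpartial n).trans (by gcongr; exacts [hR n, hds.sum_le_tsum _ fun j _ => hd j])
  have hlim' : Tendsto (fun n => Real.exp (∑' j, d j) * R n) atTop (𝓝 0) := by
    simpa using hlim.const_mul (Real.exp (∑' j, d j))
  exact le_antisymm (ge_of_tendsto' hlim' hbound) (hR 0)

theorem eq_zero_of_forall_ge_le_one_add_mul_succ {R d : ℤ → ℝ} {N : ℤ} (hR : ∀ x, 0 ≤ R x)
    (hd : ∀ x, 0 ≤ d x) (hds : Summable d) (hstep : ∀ x ≥ N, R x ≤ (1 + d x) * R (x + 1))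
    (hlim : Tendsto R atTop (𝓝 0)) (x : ℤ) (hx : N ≤ x) : R x = 0 := by
  have hshift : Tendsto (fun n : ℕ => x + n) atTop atTop :=
    tendsto_atTop_add_const_left atTop x tendsto_natCast_atTop_atTop
  simpa using eq_zero_of_le_one_add_mul_succ (R := fun n : ℕ => R (x + n))
    (d := fun n : ℕ => d (x + n)) (fun n => hR _) (fun n => hd _)
    (hds.comp_injective ((add_right_injective x).comp Nat.cast_injective))
    (fun n => by simpa [add_assoc] using hstep (x + n) (by omega)) (hlim.comp hshift)

theorem mul_abs_sub_le_norm_sub_of_sq_add_sq {s g g' δ : ℝ} {α α' : ℂ} (hs : |s| ≤ 1)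
    (hg : g ^ 2 + ‖α‖ ^ 2 = s ^ 2) (hg' : g' ^ 2 + ‖α'‖ ^ 2 = s ^ 2)
    (hδg : δ ≤ g) (hδg' : δ ≤ g') : δ * |g - g'| ≤ ‖α - α'‖ := by
  have hs2 : s ^ 2 ≤ 1 := (sq_le_one_iff_abs_le_one s).2 hs
  have hα1 : ‖α‖ ≤ 1 := by nlinarith [sq_nonneg g, norm_nonneg α]
  have hα1' : ‖α'‖ ≤ 1 := by nlinarith [sq_nonneg g', norm_nonneg α']
  rcases le_or_gt δ 0 with hδ | hδ
  · exact (mul_nonpos_of_nonpos_of_nonneg hδ (abs_nonneg _)).trans (norm_nonneg _)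
  have hsq : |g - g'| * (g + g') = |‖α'‖ - ‖α‖| * (‖α'‖ + ‖α‖) := by
    rw [← abs_of_pos (by linarith : 0 < g + g'), ← abs_of_nonneg (by positivity : 0 ≤ ‖α'‖ + ‖α‖),
      ← abs_mul, ← abs_mul]
    congr 1
    linear_combination hg - hg'
  have hdiff := abs_norm_sub_norm_le α' α
  rw [norm_sub_rev] at hdiff
  nlinarith [mul_le_mul_of_nonneg_left (by linarith : 2 * δ ≤ g + g') (abs_nonneg (g - g')),
    mul_le_mul_of_nonneg_left (by linarith : ‖α'‖ + ‖α‖ ≤ 2) (abs_nonneg (‖α'‖ - ‖α‖))]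

def IsTransferSolution (α : ℤ → ℂ) (ρ : ℤ → ℝ) (E : ℂ) (a b : ℤ → ℂ) : Prop :=
  ∀ x, ρ x * a x + conj (α x) * b (x + 1) = E * a (x + 1) ∧
    ρ x * b (x + 1) = E * b x + α x * a x

def transferCoord (s g : ℝ) (α a b : ℂ) : ℂ := I * (s - g) * a - conj α * b

theorem transferCoord_step {c s g ρ : ℝ} {α a b a' b' : ℂ}
    (hcs : c ^ 2 + s ^ 2 = 1) (hg : g ^ 2 + ‖α‖ ^ 2 = s ^ 2) (hρ : ρ ^ 2 + ‖α‖ ^ 2 = 1)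
    (hP : ρ * a + conj α * b' = (c + s * I) * a')
    (hQ : ρ * b' = (c + s * I) * b + α * a) :
    ρ * transferCoord s g α a' b' = (c + g * I) * transferCoord s g α a b := by
  have hE : (c + s * I : ℂ) ≠ 0 := by
    intro h
    have h' := congrArg normSq h
    rw [normSq_add_mul_I, map_zero] at h'
    nlinarith
  have hcsC : (c : ℂ) ^ 2 + (s : ℂ) ^ 2 = 1 := by exact_mod_cast hcs
  have hgC : (g : ℂ) ^ 2 + conj α * α = (s : ℂ) ^ 2 := by rw [conj_mul']; exact_mod_cast hg
  have hρC : (ρ : ℂ) ^ 2 + conj α * α = 1 := by rw [conj_mul']; exact_mod_cast hρ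
  apply mul_left_cancel₀ hE
  unfold transferCoord
  -- multiplied by `c + s I`, the identity follows from `hP` (eliminating `a'`) and `hQ` (`b'`)
  linear_combination (-(I * (s - g) * ρ)) * hP - (c + g * I) * conj α * hQ
    + I * (s - g) * a * hρC - (c + s * I) * a * hgC + I * (g - s) * a * hcsC
    + (c * g ^ 2 - c * s ^ 2 + s * I * g ^ 2 - s ^ 2 * I * g) * a * I_sq

theorem norm_transferCoord_step {c s g ρ : ℝ} {α a b a' b' : ℂ}
    (hcs : c ^ 2 + s ^ 2 = 1) (hg : g ^ 2 + ‖α‖ ^ 2 = s ^ 2) (hρ : ρ ^ 2 + ‖α‖ ^ 2 = 1)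
    (hρ0 : ρ ≠ 0) (hP : ρ * a + conj α * b' = (c + s * I) * a')
    (hQ : ρ * b' = (c + s * I) * b + α * a) :
    ‖transferCoord s g α a' b'‖ = ‖transferCoord s g α a b‖ := by
  have hnorm : ‖(c + g * I : ℂ)‖ = |ρ| := by
    rw [norm_add_mul_I, ← Real.sqrt_sq_eq_abs]
    congr 1
    linarith
  have h := congrArg norm (transferCoord_step hcs hg hρ hP hQ)
  rw [norm_mul, norm_mul, hnorm, norm_real, Real.norm_eq_abs] at h
  exact mul_left_cancel₀ (abs_ne_zero.2 hρ0) h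

theorem norm_transferCoord_sub_le (s g g' : ℝ) (α α' a b : ℂ) :
    ‖transferCoord s g α a b - transferCoord s g' α' a b‖ ≤ |g - g'| * ‖a‖ + ‖α - α'‖ * ‖b‖ := by
  have h : transferCoord s g α a b - transferCoord s g' α' a b
      = I * ((g' - g : ℝ) : ℂ) * a - conj (α - α') * b := by
    simp only [transferCoord, map_sub]; push_cast; ring
  rw [h]
  refine (norm_sub_le _ _).trans_eq ?_
  rw [norm_mul, norm_mul, norm_mul, norm_I, one_mul, norm_real, Real.norm_eq_abs, abs_sub_comm,
    RCLike.norm_conj]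

theorem transferCoord_neg_sub (s g : ℝ) (α a b : ℂ) :
    transferCoord s (-g) α a b - transferCoord s g α a b = I * ((2 * g : ℝ) : ℂ) * a := by
  simp only [transferCoord]; push_cast; ring

theorem conj_mul_eq_sub_transferCoord (s g : ℝ) (α a b : ℂ) :
    conj α * b = I * ((s - g : ℝ) : ℂ) * a - transferCoord s g α a b := by
  simp only [transferCoord]; push_cast; ring

noncomputable def transferNorm (s g : ℝ) (α a b : ℂ) : ℝ :=
  ‖transferCoord s g α a b‖ + ‖transferCoord s (-g) α a b‖

theorem transferNorm_nonneg (s g : ℝ) (α a b : ℂ) : 0 ≤ transferNorm s g α a b := by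
  unfold transferNorm; positivity

theorem transferNorm_step {c s g ρ : ℝ} {α a b a' b' : ℂ}
    (hcs : c ^ 2 + s ^ 2 = 1) (hg : g ^ 2 + ‖α‖ ^ 2 = s ^ 2) (hρ : ρ ^ 2 + ‖α‖ ^ 2 = 1)
    (hρ0 : ρ ≠ 0) (hP : ρ * a + conj α * b' = (c + s * I) * a')
    (hQ : ρ * b' = (c + s * I) * b + α * a) :
    transferNorm s g α a' b' = transferNorm s g α a b := by
  have hg' : (-g) ^ 2 + ‖α‖ ^ 2 = s ^ 2 := by rw [neg_sq]; exact hg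
  rw [transferNorm, transferNorm, norm_transferCoord_step hcs hg hρ hρ0 hP hQ,
    norm_transferCoord_step hcs hg' hρ hρ0 hP hQ]

theorem transferNorm_le_add (s g g' : ℝ) (α α' a b : ℂ) :
    transferNorm s g α a b
      ≤ transferNorm s g' α' a b + 2 * (|g - g'| + ‖α - α'‖) * (‖a‖ + ‖b‖) := by
  have h₁ := norm_transferCoord_sub_le s g g' α α' a b
  have h₂ := norm_transferCoord_sub_le s (-g) (-g') α α' a b
  have h₁' := norm_sub_norm_le (transferCoord s g α a b) (transferCoord s g' α' a b)
  have h₂' := norm_sub_norm_le (transferCoord s (-g) α a b) (transferCoord s (-g') α' a b)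
  rw [show -g - -g' = -(g - g') by ring, abs_neg] at h₂
  unfold transferNorm
  nlinarith [abs_nonneg (g - g'), norm_nonneg (α - α'), norm_nonneg a, norm_nonneg b]

theorem mul_norm_add_norm_le_transferNorm {s g : ℝ} {α a b : ℂ} (hs : |s| ≤ 1)
    (hg : g ^ 2 + ‖α‖ ^ 2 = s ^ 2) (hg0 : 0 ≤ g) :
    g * ‖α‖ * (‖a‖ + ‖b‖) ≤ 3 * transferNorm s g α a b := by
  have hs2 : s ^ 2 ≤ 1 := (sq_le_one_iff_abs_le_one s).2 hs
  have hg1 : g ≤ 1 := by nlinarith [sq_nonneg ‖α‖]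
  have hα1 : ‖α‖ ≤ 1 := by nlinarith [sq_nonneg g, norm_nonneg α]
  have ha : 2 * g * ‖a‖ ≤ transferNorm s g α a b := by
    have h := congrArg norm (transferCoord_neg_sub s g α a b)
    rw [norm_mul, norm_mul, norm_I, one_mul, norm_real, Real.norm_eq_abs,
      abs_of_nonneg (by positivity)] at h
    unfold transferNorm
    linarith [norm_sub_le (transferCoord s (-g) α a b) (transferCoord s g α a b)]
  have hb : ‖α‖ * ‖b‖ ≤ 2 * ‖a‖ + transferNorm s g α a b := by
    have h := congrArg norm (conj_mul_eq_sub_transferCoord s g α a b)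
    rw [norm_mul, RCLike.norm_conj] at h
    have hsg : ‖I * ((s - g : ℝ) : ℂ) * a‖ ≤ 2 * ‖a‖ := by
      rw [norm_mul, norm_mul, norm_I, one_mul, norm_real, Real.norm_eq_abs]
      gcongr
      rw [abs_le] at hs ⊢
      constructor <;> linarith
    unfold transferNorm at *
    linarith [norm_sub_le (I * ((s - g : ℝ) : ℂ) * a) (transferCoord s g α a b),
      norm_nonneg (transferCoord s (-g) α a b)]
  have hT := transferNorm_nonneg s g α a b
  nlinarith [mul_le_mul_of_nonneg_left ha (norm_nonneg α), mul_le_mul_of_nonneg_left hb hg0,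
    mul_le_mul_of_nonneg_right hα1 hT, mul_le_mul_of_nonneg_right hg1 hT]

theorem eq_zero_of_transferNorm_eq_zero {s g : ℝ} {α a b : ℂ} (hs : |s| ≤ 1)
    (hg : g ^ 2 + ‖α‖ ^ 2 = s ^ 2) (hg0 : 0 < g) (hα : α ≠ 0) (h : transferNorm s g α a b = 0) :
    a = 0 ∧ b = 0 := by
  have hcoer := mul_norm_add_norm_le_transferNorm (a := a) (b := b) hs hg hg0.le
  rw [h, mul_zero] at hcoer
  have hab : ‖a‖ + ‖b‖ ≤ 0 :=
    nonpos_of_mul_nonpos_right hcoer (mul_pos hg0 (norm_pos_iff.2 hα))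
  exact ⟨norm_le_zero_iff.1 (by linarith [norm_nonneg b]),
    norm_le_zero_iff.1 (by linarith [norm_nonneg a])⟩

theorem transferNorm_le_one_add_mul {c s g g' ρ δ m : ℝ} {α α' a b a' b' : ℂ}
    (hcs : c ^ 2 + s ^ 2 = 1) (hρ : ρ ^ 2 + ‖α‖ ^ 2 = 1) (hρ0 : ρ ≠ 0)
    (hg : g ^ 2 + ‖α‖ ^ 2 = s ^ 2) (hg' : g' ^ 2 + ‖α'‖ ^ 2 = s ^ 2)
    (hδ : 0 < δ) (hδg : δ ≤ g) (hδg' : δ ≤ g') (hm : 0 < m) (hmα' : m ≤ ‖α'‖)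
    (hP : ρ * a + conj α * b' = (c + s * I) * a')
    (hQ : ρ * b' = (c + s * I) * b + α * a) :
    transferNorm s g α a b
      ≤ (1 + 6 * (1 + δ) / (δ ^ 2 * m) * ‖α' - α‖) * transferNorm s g' α' a' b' := by
  rw [norm_sub_rev]
  have hs : |s| ≤ 1 := (sq_le_one_iff_abs_le_one s).1 (by nlinarith [sq_nonneg c])
  have hvar : δ * |g - g'| ≤ ‖α - α'‖ := mul_abs_sub_le_norm_sub_of_sq_add_sq hs hg hg' hδg hδg'
  have hcoer : δ * m * (‖a'‖ + ‖b'‖) ≤ 3 * transferNorm s g' α' a' b' := by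
    refine le_trans ?_ (mul_norm_add_norm_le_transferNorm hs hg' (hδ.le.trans hδg'))
    gcongr
    exact hδ.le.trans hδg'
  have hpert : 2 * (|g - g'| + ‖α - α'‖) * (‖a'‖ + ‖b'‖)
      ≤ 6 * (1 + δ) / (δ ^ 2 * m) * ‖α - α'‖ * transferNorm s g' α' a' b' := by
    calc 2 * (|g - g'| + ‖α - α'‖) * (‖a'‖ + ‖b'‖)
        = 2 * (δ * |g - g'| + δ * ‖α - α'‖) * (δ * m * (‖a'‖ + ‖b'‖)) / (δ ^ 2 * m) := by
          field_simp
      _ ≤ 2 * ((1 + δ) * ‖α - α'‖) * (3 * transferNorm s g' α' a' b') / (δ ^ 2 * m) := by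
          gcongr
          linarith
      _ = 6 * (1 + δ) / (δ ^ 2 * m) * ‖α - α'‖ * transferNorm s g' α' a' b' := by ring
  calc transferNorm s g α a b = transferNorm s g α a' b' :=
        (transferNorm_step hcs hg hρ hρ0 hP hQ).symm
    _ ≤ transferNorm s g' α' a' b' + 2 * (|g - g'| + ‖α - α'‖) * (‖a'‖ + ‖b'‖) :=
        transferNorm_le_add s g g' α α' a' b'
    _ ≤ _ := by linarith

theorem Filter.Tendsto.transferNorm_zero {ι : Type*} {l : Filter ι} (s : ℝ) {g : ι → ℝ}
    {α a b : ι → ℂ} {g₀ : ℝ} {α₀ : ℂ} (hg : Tendsto g l (𝓝 g₀)) (hα : Tendsto α l (𝓝 α₀))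
    (ha : Tendsto a l (𝓝 0)) (hb : Tendsto b l (𝓝 0)) :
    Tendsto (fun i => transferNorm s (g i) (α i) (a i) (b i)) l (𝓝 0) := by
  have hcont : Continuous fun p : ℝ × ℂ × ℂ × ℂ => transferNorm s p.1 p.2.1 p.2.2.1 p.2.2.2 := by
    unfold transferNorm transferCoord; fun_prop
  have h := (hcont.tendsto (g₀, α₀, 0, 0)).comp
    (hg.prodMk_nhds (hα.prodMk_nhds (ha.prodMk_nhds hb)))
  rwa [show transferNorm s g₀ α₀ 0 0 = 0 by simp [transferNorm, transferCoord]] at h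

namespace IsTransferSolution

variable {α : ℤ → ℂ} {ρ : ℤ → ℝ} {E : ℂ} {a b : ℤ → ℂ}

theorem eq_zero_of_forall_ge (h : IsTransferSolution α ρ E a b) (hρ0 : ∀ x, ρ x ≠ 0)
    (hE : E ≠ 0) {N : ℤ} (hN : ∀ x ≥ N, a x = 0 ∧ b x = 0) (x : ℤ) : a x = 0 ∧ b x = 0 := by
  rcases le_total N x with hx | hx
  · exact hN x hx
  refine Int.leInductionDown (motive := fun y _ => a y = 0 ∧ b y = 0) (hN N le_rfl) ?_ x hx
  rintro y - ⟨hay, hby⟩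
  obtain ⟨hP, hQ⟩ := h (y - 1)
  rw [sub_add_cancel, hay, hby, mul_zero, mul_zero, add_zero] at hP
  rw [sub_add_cancel, hby, mul_zero] at hQ
  have ha : a (y - 1) = 0 := (mul_eq_zero.1 hP).resolve_left (by exact_mod_cast hρ0 (y - 1))
  rw [ha, mul_zero, add_zero] at hQ
  exact ⟨ha, (mul_eq_zero.1 hQ.symm).resolve_left hE⟩

theorem exists_forall_ge_eq_zero (h : IsTransferSolution α ρ E a b) (hE : ‖E‖ = 1)
    (hρ : ∀ x, ρ x ^ 2 + ‖α x‖ ^ 2 = 1) (hρ0 : ∀ x, ρ x ≠ 0)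
    (hsum : Summable fun x => ‖α (x + 1) - α x‖) {α₀ : ℂ} (hα : Tendsto α atTop (𝓝 α₀))
    (hα₀ : α₀ ≠ 0) (hre : E.re ^ 2 + ‖α₀‖ ^ 2 < 1)
    (ha : Tendsto a atTop (𝓝 0)) (hb : Tendsto b atTop (𝓝 0)) :
    ∃ N, ∀ x ≥ N, a x = 0 ∧ b x = 0 := by
  set c := E.re
  set s := E.im
  have hcs : c ^ 2 + s ^ 2 = 1 := by
    have h2 := Complex.sq_norm E
    rw [hE, one_pow, normSq_apply] at h2
    linear_combination -h2
  have hs : |s| ≤ 1 := hE ▸ abs_im_le_norm E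
  have hEcs : E = c + s * I := (re_add_im E).symm
  set g : ℤ → ℝ := fun x => √(s ^ 2 - ‖α x‖ ^ 2)
  set g₀ := √(s ^ 2 - ‖α₀‖ ^ 2)
  have hg₀ : 0 < g₀ := Real.sqrt_pos.2 (by linarith)
  have hg : Tendsto g atTop (𝓝 g₀) := ((hα.norm.pow 2).const_sub _).sqrt
  obtain ⟨N, hN⟩ : ∃ N, ∀ x ≥ N, g₀ / 2 ≤ g x ∧ ‖α₀‖ / 2 ≤ ‖α x‖ :=
    eventually_atTop.1 ((hg.eventually (eventually_ge_nhds (half_lt_self hg₀))).and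
      (hα.norm.eventually (eventually_ge_nhds (half_lt_self (norm_pos_iff.2 hα₀)))))
  have hgsq : ∀ x ≥ N, g x ^ 2 + ‖α x‖ ^ 2 = s ^ 2 := fun x hx => by
    rw [Real.sq_sqrt (Real.sqrt_pos.1 (by linarith [(hN x hx).1])).le]; ring
  have hT : ∀ x ≥ N, transferNorm s (g x) (α x) (a x) (b x) = 0 :=
    eq_zero_of_forall_ge_le_one_add_mul_succ (fun x => transferNorm_nonneg _ _ _ _ _)
      (fun x => by positivity) (hsum.mul_left _)
      (fun x hx => transferNorm_le_one_add_mul hcs (hρ x) (hρ0 x) (hgsq x hx)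
        (hgsq (x + 1) (by omega)) (by positivity) (hN x hx).1 (hN (x + 1) (by omega)).1
        (by positivity) (hN (x + 1) (by omega)).2 (hEcs ▸ (h x).1) (hEcs ▸ (h x).2))
      (hg.transferNorm_zero s hα ha hb)
  refine ⟨N, fun x hx => eq_zero_of_transferNorm_eq_zero hs (hgsq x hx) ?_ ?_ (hT x hx)⟩
  · linarith [(hN x hx).1]
  · exact norm_pos_iff.1 (by linarith [(hN x hx).2, norm_pos_iff.2 hα₀])

end IsTransferSolution

theorem absence_of_embedded_eigenvalues_general
    (α : ℤ → ℂ)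
    (h02 : ∀ x : ℤ, ‖α x‖ < 1)
    (hsum : Summable fun x : ℤ => ‖α (x + 1) - α x‖)
    (αp : ℂ)
    (htop : Tendsto α atTop (nhds αp))
    (h0p : 0 < ‖αp‖)
    (ρ : ℤ → ℝ) (hρ : ∀ x : ℤ, ρ x = Real.sqrt (1 - ‖α x‖ ^ 2))
    (ρinf : ℝ) (hρinf : ρinf = Real.sqrt (1 - ‖αp‖ ^ 2))
    (lam : ℝ) (hlam : |Real.cos lam| < ρinf)
    (u : ℤ → ℂ × ℂ)
    (hu : Summable fun x : ℤ => ‖u x‖ ^ 2)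
    (heig : ∀ x : ℤ,
      (ρ (x - 1) : ℂ) * (u (x - 1)).1 + (starRingEnd ℂ) (α (x - 1)) * (u (x - 1)).2
          = Complex.exp (Complex.I * (lam : ℂ)) * (u x).1 ∧
        -(α (x + 1)) * (u (x + 1)).1 + (ρ (x + 1) : ℂ) * (u (x + 1)).2
          = Complex.exp (Complex.I * (lam : ℂ)) * (u x).2) :
    ∀ x : ℤ, u x = 0 := by
  have hρα : ∀ x, ρ x ^ 2 + ‖α x‖ ^ 2 = 1 := fun x => by
    rw [hρ, Real.sq_sqrt (by nlinarith [h02 x, norm_nonneg (α x)])]; ring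
  have hρ0 : ∀ x, ρ x ≠ 0 := fun x => by
    rw [hρ]; exact (Real.sqrt_pos.2 (by nlinarith [h02 x, norm_nonneg (α x)])).ne'
  rw [show I * (lam : ℂ) = lam * I from mul_comm _ _] at heig
  set E := cexp (lam * I)
  have hE : ‖E‖ = 1 := norm_exp_ofReal_mul_I lam
  have hre : E.re ^ 2 + ‖αp‖ ^ 2 < 1 := by
    have h := (Real.lt_sqrt (abs_nonneg _)).1 (hρinf ▸ hlam)
    rw [sq_abs] at h
    rw [exp_ofReal_mul_I_re]
    linarith
  have hsol : IsTransferSolution α ρ E (fun x => (u x).1) (fun x => (u (x - 1)).2) := fun x => by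
    have h := (heig (x - 1)).2
    simp only [sub_add_cancel] at h
    exact ⟨by simpa using (heig (x + 1)).1,
      by simp only [add_sub_cancel_right]; linear_combination h⟩
  have hu0 : Tendsto u atTop (𝓝 0) :=
    hu.tendsto_cofinite_zero_of_norm_sq.mono_left atTop_le_cofinite
  have hdown : Tendsto (fun x : ℤ => x - 1) atTop atTop :=
    tendsto_atTop_add_const_right _ _ tendsto_id
  obtain ⟨N, hN⟩ := hsol.exists_forall_ge_eq_zero hE hρα hρ0 hsum htop (norm_pos_iff.1 h0p) hre
    (by simpa using hu0.fst_nhds) (by simpa using (hu0.comp hdown).snd_nhds)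
  have hzero := hsol.eq_zero_of_forall_ge hρ0 (by simp [E]) hN
  exact fun x => Prod.ext (hzero x).1 (by simpa using (hzero (x + 1)).2)

/-- Absence of embedded eigenvalues for the one-dimensional quantum walk with
general long-range coin: if `|cos λ| < ρ∞` and `u` is a square-summable solution of
`U u = e^{iλ} u`, then `u = 0`. -/
theorem absence_of_embedded_eigenvalues
    (α : ℤ → ℂ)
    (h01 : ∀ x : ℤ, 0 < ‖α x‖) (h02 : ∀ x : ℤ, ‖α x‖ < 1)
    (hsum : Summable fun x : ℤ => ‖α (x + 1) - α x‖)
    (αp αm : ℂ)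
    (htop : Tendsto α atTop (nhds αp))
    (hbot : Tendsto α atBot (nhds αm))
    (hpm : ‖αp‖ = ‖αm‖) (h0p : 0 < ‖αp‖) (h1p : ‖αp‖ < 1)
    (ρ : ℤ → ℝ) (hρ : ∀ x : ℤ, ρ x = Real.sqrt (1 - ‖α x‖ ^ 2))
    (ρinf : ℝ) (hρinf : ρinf = Real.sqrt (1 - ‖αp‖ ^ 2))
    (lam : ℝ) (hlam : |Real.cos lam| < ρinf)
    (u : ℤ → ℂ × ℂ)
    (hu : Summable fun x : ℤ => ‖u x‖ ^ 2)
    (heig : ∀ x : ℤ,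
      (ρ (x - 1) : ℂ) * (u (x - 1)).1 + (starRingEnd ℂ) (α (x - 1)) * (u (x - 1)).2
          = Complex.exp (Complex.I * (lam : ℂ)) * (u x).1 ∧
        -(α (x + 1)) * (u (x + 1)).1 + (ρ (x + 1) : ℂ) * (u (x + 1)).2
          = Complex.exp (Complex.I * (lam : ℂ)) * (u x).2) :
    ∀ x : ℤ, u x = 0 :=
  absence_of_embedded_eigenvalues_general α h02 hsum αp htop h0p ρ hρ ρinf hρinf lam hlam u hu heig
end

section
/- Equivalence of the generalized eigenvalue problem and the transfer-matrix recursion: for every λ ∈ ℂ and every function u : ℤ → ℂ², one has (Uu)(x) = e^{iλ}u(x) for all x ∈ ℤ if and only if (Ju)(x+1) = T_λ(x)·(Ju)(x) for all x ∈ ℤ. -/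
open Complex
open scoped ComplexConjugate

/-!
The two systems are the same pointwise equations, regrouped. The second component of
`U u = e^{iλ} u` at `x - 1` is, solved for `u₂(x)`, the first row of the recursion at `x`.
Given it, the first component at `x + 1`, multiplied by `ρ(x)`, becomes `e^{iλ}` times the
second row, because `ρ(x)² = 1 - α(x) conj(α(x))` and `e^{iλ} e^{-iλ} = 1`.
-/

theorem Int.forall_and_iff_forall_shift (P Q : ℤ → Prop) :
    (∀ x, P x ∧ Q x) ↔ ∀ x, Q (x - 1) ∧ P (x + 1) := by
  refine ⟨fun h x => ⟨(h _).2, (h _).1⟩, fun h x => ⟨?_, ?_⟩⟩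
  · simpa using (h (x - 1)).2
  · simpa using (h (x + 1)).1

/-- In the variables `p = u₂(x-1)`, `s = u₁(x)`, `q = u₂(x)`, `t = u₁(x+1)`, the left side is the
eigenvalue equation at `x - 1` (second row) and `x + 1` (first row), the right side the transfer
recursion at `x`. -/
theorem eigen_pair_iff_transfer_pair {K : Type*} [Field K] {r a b e e' p s q t : K}
    (hr : r ≠ 0) (hrr : r * r = 1 - a * b) (hee : e * e' = 1) :
    (-a * s + r * q = e * p ∧ r * s + b * q = e * t) ↔
      (r * q = e * p + a * s ∧ r * t = b * p + e' * s) := by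
  have he : e ≠ 0 := left_ne_zero_of_mul_eq_one hee
  refine ⟨fun ⟨hq, ht⟩ => ⟨by linear_combination hq, ?_⟩,
    fun ⟨hq, ht⟩ => ⟨by linear_combination hq, ?_⟩⟩
  · apply mul_left_cancel₀ he
    linear_combination -r * ht + b * hq - s * hee + s * hrr
  · apply mul_left_cancel₀ hr
    linear_combination -e * ht + b * hq - s * hee + s * hrr

theorem Complex.ofReal_sqrt_one_sub_norm_sq_mul_self {z : ℂ} (hz : ‖z‖ ≤ 1) :
    (Real.sqrt (1 - ‖z‖ ^ 2) : ℂ) * Real.sqrt (1 - ‖z‖ ^ 2) = 1 - z * conj z := by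
  rw [← ofReal_mul, Real.mul_self_sqrt (by nlinarith [norm_nonneg z]), mul_conj,
    normSq_eq_norm_sq]
  push_cast
  ring

theorem Real.sqrt_one_sub_norm_sq_pos {E : Type*} [SeminormedAddGroup E] {z : E}
    (hz : ‖z‖ < 1) : 0 < Real.sqrt (1 - ‖z‖ ^ 2) :=
  Real.sqrt_pos.2 (by nlinarith [norm_nonneg z])

theorem generalized_eigenvalue_transfer_matrix_equiv_general
    (α : ℤ → ℂ) (h02 : ∀ x : ℤ, ‖α x‖ < 1)
    (ρ : ℤ → ℝ) (hρ : ∀ x : ℤ, ρ x = Real.sqrt (1 - ‖α x‖ ^ 2))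
    (lam : ℂ) (u : ℤ → ℂ × ℂ) :
    (∀ x : ℤ,
      (ρ (x - 1) : ℂ) * (u (x - 1)).1 + (starRingEnd ℂ) (α (x - 1)) * (u (x - 1)).2
          = Complex.exp (Complex.I * lam) * (u x).1 ∧
        -(α (x + 1)) * (u (x + 1)).1 + (ρ (x + 1) : ℂ) * (u (x + 1)).2
          = Complex.exp (Complex.I * lam) * (u x).2)
    ↔ (∀ x : ℤ,
      (((u x).2, (u (x + 1)).1) : ℂ × ℂ)
        = ((ρ x : ℂ)⁻¹ * (Complex.exp (Complex.I * lam) * (u (x - 1)).2 + α x * (u x).1),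
            (ρ x : ℂ)⁻¹ * ((starRingEnd ℂ) (α x) * (u (x - 1)).2
              + Complex.exp (-(Complex.I * lam)) * (u x).1))) := by
  have hρ_ne : ∀ x, (ρ x : ℂ) ≠ 0 := fun x =>
    ofReal_ne_zero.2 (hρ x ▸ Real.sqrt_one_sub_norm_sq_pos (h02 x)).ne'
  have hρ_sq : ∀ x, (ρ x : ℂ) * ρ x = 1 - α x * conj (α x) := fun x =>
    hρ x ▸ ofReal_sqrt_one_sub_norm_sq_mul_self (h02 x).le
  have hexp : exp (I * lam) * exp (-(I * lam)) = 1 := by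
    rw [← exp_add, add_neg_cancel, exp_zero]
  rw [Int.forall_and_iff_forall_shift]
  refine forall_congr' fun x => ?_
  simp only [add_sub_cancel_right, sub_add_cancel, Prod.mk.injEq, eq_inv_mul_iff_mul_eq₀ (hρ_ne x)]
  exact eigen_pair_iff_transfer_pair (hρ_ne x) (hρ_sq x) hexp

/-- Equivalence of the generalized eigenvalue problem `U u = e^{iλ} u` and the
transfer-matrix recursion `(Ju)(x+1) = T_λ(x) (Ju)(x)`, where
`(Ju)(x) = (u₂(x−1), u₁(x))` and
`T_λ(x) = ρ(x)⁻¹ [[e^{iλ}, α(x)], [conj(α(x)), e^{−iλ}]]`. -/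
theorem generalized_eigenvalue_transfer_matrix_equiv
    (α : ℤ → ℂ) (h01 : ∀ x : ℤ, 0 < ‖α x‖) (h02 : ∀ x : ℤ, ‖α x‖ < 1)
    (ρ : ℤ → ℝ) (hρ : ∀ x : ℤ, ρ x = Real.sqrt (1 - ‖α x‖ ^ 2))
    (lam : ℂ) (u : ℤ → ℂ × ℂ) :
    (∀ x : ℤ,
      (ρ (x - 1) : ℂ) * (u (x - 1)).1 + (starRingEnd ℂ) (α (x - 1)) * (u (x - 1)).2
          = Complex.exp (Complex.I * lam) * (u x).1 ∧
        -(α (x + 1)) * (u (x + 1)).1 + (ρ (x + 1) : ℂ) * (u (x + 1)).2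
          = Complex.exp (Complex.I * lam) * (u x).2)
    ↔ (∀ x : ℤ,
      (((u x).2, (u (x + 1)).1) : ℂ × ℂ)
        = ((ρ x : ℂ)⁻¹ * (Complex.exp (Complex.I * lam) * (u (x - 1)).2 + α x * (u x).1),
            (ρ x : ℂ)⁻¹ * ((starRingEnd ℂ) (α x) * (u (x - 1)).2
              + Complex.exp (-(Complex.I * lam)) * (u x).1))) :=
  generalized_eigenvalue_transfer_matrix_equiv_general α h02 ρ hρ lam u
end

section
/- Linear dependence of a bounded and a square-summable generalized eigenfunction: let λ ∈ ℂ and suppose u₁, u₂ : ℤ → ℂ² both satisfy (Uu_j)(x) = e^{iλ}u_j(x) for all x ∈ ℤ. If u₁ is bounded on {x ∈ ℤ : x ≥ 0} and ∑_{x∈ℤ} ‖u₂(x)‖² < ∞, then u₁ and u₂ are linearly dependent, i.e. there exist c₁, c₂ ∈ ℂ, not both zero, with c₁u₁(x) + c₂u₂(x) = 0 for all x ∈ ℤ. -/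
/-!
For two solutions of `U u = e^{iλ} u`, the weighted Wronskian
`ρ(x) (u₁(x)₁ u₂(x)₂ - u₁(x)₂ u₂(x)₁)` does not depend on `x`. As `|ρ| ≤ 1`, `u₁` is bounded on
`x ≥ 0` and `u₂(x) → 0` as `x → ∞`, it vanishes, so `u₁(0)` and `u₂(0)` are proportional.
Since `ρ` and `e^{iλ}` never vanish, the eigenvalue equation can be solved for `u(x + 1)` in
terms of `u(x)` and conversely, so a solution is determined by its value at `0`; hence the
combination that kills `u₁(0)` and `u₂(0)` kills `u₁` and `u₂` everywhere.
-/

open Complex Filter Topology Module.End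

namespace QuantumWalk

/-- The evolution `U`, on all of `ℤ → ℂ²` rather than on `ℓ²`, so that its eigenvectors are
the generalized eigenfunctions. -/
def evolution (α : ℤ → ℂ) (ρ : ℤ → ℝ) : Module.End ℂ (ℤ → ℂ × ℂ) where
  toFun u x := ((ρ (x - 1) : ℂ) * (u (x - 1)).1 + starRingEnd ℂ (α (x - 1)) * (u (x - 1)).2,
    -α (x + 1) * (u (x + 1)).1 + (ρ (x + 1) : ℂ) * (u (x + 1)).2)
  map_add' u v := by ext x <;> simp <;> ring
  map_smul' c u := by ext x <;> simp <;> ring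

def wronskian {R : Type*} [CommRing R] (a b : R × R) : R := a.1 * b.2 - a.2 * b.1

lemma norm_wronskian_le {R : Type*} [SeminormedCommRing R] (a b : R × R) :
    ‖wronskian a b‖ ≤ 2 * ‖a‖ * ‖b‖ :=
  calc ‖wronskian a b‖ ≤ ‖a.1‖ * ‖b.2‖ + ‖a.2‖ * ‖b.1‖ :=
        (norm_sub_le _ _).trans (add_le_add (norm_mul_le _ _) (norm_mul_le _ _))
    _ ≤ ‖a‖ * ‖b‖ + ‖a‖ * ‖b‖ := by
        gcongr <;> first | exact norm_fst_le _ | exact norm_snd_le _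
    _ = 2 * ‖a‖ * ‖b‖ := by ring

lemma exists_smul_add_smul_eq_zero_of_wronskian_eq_zero {K : Type*} [Field K] {a b : K × K}
    (h : wronskian a b = 0) : ∃ c₁ c₂ : K, (c₁ ≠ 0 ∨ c₂ ≠ 0) ∧ c₁ • a + c₂ • b = 0 := by
  unfold wronskian at h
  by_cases hb₁ : b.1 = 0
  · by_cases hb₂ : b.2 = 0
    · exact ⟨0, 1, Or.inr one_ne_zero, by ext <;> simp [hb₁, hb₂]⟩
    · refine ⟨b.2, -a.2, Or.inl hb₂, ?_⟩
      ext <;> simp only [Prod.fst_add, Prod.snd_add, Prod.smul_fst, Prod.smul_snd, smul_eq_mul,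
        Prod.fst_zero, Prod.snd_zero]
      · linear_combination h
      · ring
  · refine ⟨b.1, -a.1, Or.inl hb₁, ?_⟩
    ext <;> simp only [Prod.fst_add, Prod.snd_add, Prod.smul_fst, Prod.smul_snd, smul_eq_mul,
      Prod.fst_zero, Prod.snd_zero]
    · ring
    · linear_combination -h

lemma tendsto_atTop_zero_of_summable_norm_sq {E : Type*} [SeminormedAddCommGroup E]
    {v : ℤ → E} (h : Summable fun x => ‖v x‖ ^ 2) : Tendsto v atTop (𝓝 0) := by
  rw [tendsto_zero_iff_norm_tendsto_zero]
  have := (h.tendsto_cofinite_zero.mono_left (Int.cofinite_eq ▸ le_sup_right)).sqrt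
  simpa [Real.sqrt_sq (norm_nonneg _)] using this

variable {α : ℤ → ℂ} {ρ : ℤ → ℝ} {E : ℂ} {u v : ℤ → ℂ × ℂ}

lemma mem_eigenspace_evolution_iff :
    u ∈ eigenspace (evolution α ρ) E ↔ ∀ x : ℤ,
      (ρ (x - 1) : ℂ) * (u (x - 1)).1 + starRingEnd ℂ (α (x - 1)) * (u (x - 1)).2
          = E * (u x).1 ∧
        -α (x + 1) * (u (x + 1)).1 + (ρ (x + 1) : ℂ) * (u (x + 1)).2 = E * (u x).2 := by
  rw [mem_eigenspace_iff]
  simp [funext_iff, Prod.ext_iff, evolution]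

lemma eigen_fst_succ (hu : u ∈ eigenspace (evolution α ρ) E) (x : ℤ) :
    (ρ x : ℂ) * (u x).1 + starRingEnd ℂ (α x) * (u x).2 = E * (u (x + 1)).1 := by
  simpa using (mem_eigenspace_evolution_iff.1 hu (x + 1)).1

lemma eigen_snd_succ (hu : u ∈ eigenspace (evolution α ρ) E) (x : ℤ) :
    -α (x + 1) * (u (x + 1)).1 + (ρ (x + 1) : ℂ) * (u (x + 1)).2 = E * (u x).2 :=
  (mem_eigenspace_evolution_iff.1 hu x).2

section Uniqueness

variable (hE : E ≠ 0) (hρ : ∀ x, ρ x ≠ 0)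
include hE hρ

lemma apply_succ_eq_zero_iff (hu : u ∈ eigenspace (evolution α ρ) E) (x : ℤ) :
    u (x + 1) = 0 ↔ u x = 0 := by
  have h₁ := eigen_fst_succ hu x
  have h₂ := eigen_snd_succ hu x
  have hρx : (ρ x : ℂ) ≠ 0 := ofReal_ne_zero.2 (hρ x)
  have hρx₁ : (ρ (x + 1) : ℂ) ≠ 0 := ofReal_ne_zero.2 (hρ (x + 1))
  constructor
  · intro h
    simp only [h, Prod.fst_zero, Prod.snd_zero, mul_zero, add_zero] at h₁ h₂
    have hs : (u x).2 = 0 := (mul_eq_zero.1 h₂.symm).resolve_left hE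
    simp only [hs, mul_zero, add_zero] at h₁
    exact Prod.ext ((mul_eq_zero.1 h₁).resolve_left hρx) hs
  · intro h
    simp only [h, Prod.fst_zero, Prod.snd_zero, mul_zero, add_zero] at h₁ h₂
    have hf : (u (x + 1)).1 = 0 := (mul_eq_zero.1 h₁.symm).resolve_left hE
    simp only [hf, mul_zero, zero_add] at h₂
    exact Prod.ext hf ((mul_eq_zero.1 h₂).resolve_left hρx₁)

lemma eq_zero_of_mem_eigenspace_of_apply_zero (hu : u ∈ eigenspace (evolution α ρ) E)
    (h₀ : u 0 = 0) : u = 0 := by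
  funext x
  induction x using Int.induction_on with
  | zero => exact h₀
  | succ i ih => exact (apply_succ_eq_zero_iff hE hρ hu i).2 ih
  | pred i ih => exact (apply_succ_eq_zero_iff hE hρ hu (-i - 1)).1 (by rwa [sub_add_cancel])

end Uniqueness

section Wronskian

variable (hE : E ≠ 0) (hu : u ∈ eigenspace (evolution α ρ) E)
  (hv : v ∈ eigenspace (evolution α ρ) E)
include hE hu hv

lemma ofReal_mul_wronskian_succ (x : ℤ) :
    (ρ (x + 1) : ℂ) * wronskian (u (x + 1)) (v (x + 1)) = ρ x * wronskian (u x) (v x) := by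
  apply mul_left_cancel₀ hE
  unfold wronskian
  linear_combination (E * (u (x + 1)).1) * eigen_snd_succ hv x
    - (E * (v (x + 1)).1) * eigen_snd_succ hu x - (E * (v x).2) * eigen_fst_succ hu x
    + (E * (u x).2) * eigen_fst_succ hv x

/-- Constancy of the weighted Wronskian `ρ W`, the discrete analogue of Abel's identity. -/
lemma ofReal_mul_wronskian_eq (x : ℤ) :
    (ρ x : ℂ) * wronskian (u x) (v x) = ρ 0 * wronskian (u 0) (v 0) := by
  induction x using Int.induction_on with
  | zero => rfl
  | succ i ih => rw [ofReal_mul_wronskian_succ hE hu hv, ih]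
  | pred i ih => rw [← ih, ← ofReal_mul_wronskian_succ hE hu hv, sub_add_cancel]

lemma wronskian_eq_zero_of_bounded_of_tendsto_zero (hρ₀ : ρ 0 ≠ 0) (hρ : ∀ x, |ρ x| ≤ 1)
    (hbdd : ∃ M : ℝ, ∀ x : ℤ, 0 ≤ x → ‖u x‖ ≤ M) (hlim : Tendsto v atTop (𝓝 0)) :
    wronskian (u 0) (v 0) = 0 := by
  obtain ⟨M, hM⟩ := hbdd
  have hbound : ∀ x ≥ (0 : ℤ), ‖(ρ 0 : ℂ) * wronskian (u 0) (v 0)‖ ≤ 2 * M * ‖v x‖ := by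
    intro x hx
    rw [← ofReal_mul_wronskian_eq hE hu hv x, norm_mul, norm_real, Real.norm_eq_abs]
    calc |ρ x| * ‖wronskian (u x) (v x)‖ ≤ 1 * (2 * ‖u x‖ * ‖v x‖) :=
          mul_le_mul (hρ x) (norm_wronskian_le _ _) (norm_nonneg _) zero_le_one
      _ ≤ 2 * M * ‖v x‖ := by rw [one_mul]; gcongr; exact hM x hx
  have hzero : ‖(ρ 0 : ℂ) * wronskian (u 0) (v 0)‖ ≤ 0 :=
    ge_of_tendsto (by simpa using hlim.norm.const_mul (2 * M)) (eventually_atTop.2 ⟨0, hbound⟩)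
  exact (mul_eq_zero.1 (norm_le_zero_iff.1 hzero)).resolve_left (ofReal_ne_zero.2 hρ₀)

end Wronskian

end QuantumWalk

open QuantumWalk in
theorem bounded_and_l2_eigenfunctions_linearly_dependent_general
    (α : ℤ → ℂ) (h02 : ∀ x : ℤ, ‖α x‖ < 1)
    (ρ : ℤ → ℝ) (hρ : ∀ x : ℤ, ρ x = Real.sqrt (1 - ‖α x‖ ^ 2))
    (lam : ℂ) (u₁ u₂ : ℤ → ℂ × ℂ)
    (heig₁ : ∀ x : ℤ,
      (ρ (x - 1) : ℂ) * (u₁ (x - 1)).1 + (starRingEnd ℂ) (α (x - 1)) * (u₁ (x - 1)).2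
          = Complex.exp (Complex.I * lam) * (u₁ x).1 ∧
        -(α (x + 1)) * (u₁ (x + 1)).1 + (ρ (x + 1) : ℂ) * (u₁ (x + 1)).2
          = Complex.exp (Complex.I * lam) * (u₁ x).2)
    (heig₂ : ∀ x : ℤ,
      (ρ (x - 1) : ℂ) * (u₂ (x - 1)).1 + (starRingEnd ℂ) (α (x - 1)) * (u₂ (x - 1)).2
          = Complex.exp (Complex.I * lam) * (u₂ x).1 ∧
        -(α (x + 1)) * (u₂ (x + 1)).1 + (ρ (x + 1) : ℂ) * (u₂ (x + 1)).2
          = Complex.exp (Complex.I * lam) * (u₂ x).2)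
    (hbdd : ∃ M : ℝ, ∀ x : ℤ, 0 ≤ x → ‖u₁ x‖ ≤ M)
    (hl2 : Summable fun x : ℤ => ‖u₂ x‖ ^ 2) :
    ∃ c₁ c₂ : ℂ, (c₁ ≠ 0 ∨ c₂ ≠ 0) ∧ ∀ x : ℤ, c₁ • u₁ x + c₂ • u₂ x = 0 := by
  have hρ_pos (x : ℤ) : 0 < ρ x := by
    rw [hρ]; exact Real.sqrt_pos.2 (by nlinarith [h02 x, norm_nonneg (α x)])
  have hρ_le (x : ℤ) : |ρ x| ≤ 1 := by
    rw [abs_of_pos (hρ_pos x), hρ, Real.sqrt_le_one]; nlinarith [norm_nonneg (α x)]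
  have hE : Complex.exp (Complex.I * lam) ≠ 0 := Complex.exp_ne_zero _
  have hu₁ := mem_eigenspace_evolution_iff.2 heig₁
  have hu₂ := mem_eigenspace_evolution_iff.2 heig₂
  obtain ⟨c₁, c₂, hc, h₀⟩ := exists_smul_add_smul_eq_zero_of_wronskian_eq_zero
    (wronskian_eq_zero_of_bounded_of_tendsto_zero hE hu₁ hu₂ (hρ_pos 0).ne' hρ_le hbdd
      (tendsto_atTop_zero_of_summable_norm_sq hl2))
  refine ⟨c₁, c₂, hc, congrFun (eq_zero_of_mem_eigenspace_of_apply_zero hE (fun x => (hρ_pos x).ne')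
    (add_mem (Submodule.smul_mem _ c₁ hu₁) (Submodule.smul_mem _ c₂ hu₂)) h₀)⟩

/-- A generalized eigenfunction that is bounded on `{x ≥ 0}` and a square-summable
generalized eigenfunction of the quantum walk `U` (for the same eigenvalue `e^{iλ}`)
are linearly dependent. -/
theorem bounded_and_l2_eigenfunctions_linearly_dependent
    (α : ℤ → ℂ) (h01 : ∀ x : ℤ, 0 < ‖α x‖) (h02 : ∀ x : ℤ, ‖α x‖ < 1)
    (ρ : ℤ → ℝ) (hρ : ∀ x : ℤ, ρ x = Real.sqrt (1 - ‖α x‖ ^ 2))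
    (lam : ℂ) (u₁ u₂ : ℤ → ℂ × ℂ)
    (heig₁ : ∀ x : ℤ,
      (ρ (x - 1) : ℂ) * (u₁ (x - 1)).1 + (starRingEnd ℂ) (α (x - 1)) * (u₁ (x - 1)).2
          = Complex.exp (Complex.I * lam) * (u₁ x).1 ∧
        -(α (x + 1)) * (u₁ (x + 1)).1 + (ρ (x + 1) : ℂ) * (u₁ (x + 1)).2
          = Complex.exp (Complex.I * lam) * (u₁ x).2)
    (heig₂ : ∀ x : ℤ,
      (ρ (x - 1) : ℂ) * (u₂ (x - 1)).1 + (starRingEnd ℂ) (α (x - 1)) * (u₂ (x - 1)).2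
          = Complex.exp (Complex.I * lam) * (u₂ x).1 ∧
        -(α (x + 1)) * (u₂ (x + 1)).1 + (ρ (x + 1) : ℂ) * (u₂ (x + 1)).2
          = Complex.exp (Complex.I * lam) * (u₂ x).2)
    (hbdd : ∃ M : ℝ, ∀ x : ℤ, 0 ≤ x → ‖u₁ x‖ ≤ M)
    (hl2 : Summable fun x : ℤ => ‖u₂ x‖ ^ 2) :
    ∃ c₁ c₂ : ℂ, (c₁ ≠ 0 ∨ c₂ ≠ 0) ∧ ∀ x : ℤ, c₁ • u₁ x + c₂ • u₂ x = 0 :=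
  bounded_and_l2_eigenfunctions_linearly_dependent_general α h02 ρ hρ lam u₁ u₂ heig₁ heig₂ hbdd hl2
end

section
/- Dispersion relation for the transfer matrix: let ρ ∈ ℝ with 0 < ρ ≤ 1, α ∈ ℂ with |α|² = 1 − ρ², λ ∈ ℂ, and T = ρ⁻¹·[[e^{iλ}, α], [conj(α), e^{−iλ}]]. Then there exists ξ ∈ ℂ with Im ξ ≥ 0 and ρ·cos ξ = cos λ, and for any ξ ∈ ℂ satisfying ρ·cos ξ = cos λ one has det(T − z·I) = (e^{iξ} − z)·(e^{−iξ} − z) for all z ∈ ℂ; in particular the eigenvalues of T are exactly e^{iξ} and e^{−iξ}. -/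
open Complex Matrix

/-- Dispersion relation: the eigenvalues of the transfer matrix
`T = ρ⁻¹ [[e^{iλ}, α], [conj α, e^{−iλ}]]` are `e^{±iξ}` where `ρ cos ξ = cos λ`
and `Im ξ ≥ 0` can be assumed. -/
theorem transfer_matrix_dispersion_relation
    (ρ : ℝ) (hρ0 : 0 < ρ) (hρ1 : ρ ≤ 1)
    (α : ℂ) (hα : ‖α‖ ^ 2 = 1 - ρ ^ 2)
    (lam : ℂ)
    (T : Matrix (Fin 2) (Fin 2) ℂ)
    (hT : T = (ρ : ℂ)⁻¹ •
      Matrix.of ![![Complex.exp (Complex.I * lam), α],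
                  ![(starRingEnd ℂ) α, Complex.exp (-(Complex.I * lam))]]) :
    (∃ ξ : ℂ, 0 ≤ ξ.im ∧ (ρ : ℂ) * Complex.cos ξ = Complex.cos lam) ∧
      ∀ ξ : ℂ, (ρ : ℂ) * Complex.cos ξ = Complex.cos lam →
        (∀ z : ℂ, (T - z • (1 : Matrix (Fin 2) (Fin 2) ℂ)).det
            = (Complex.exp (Complex.I * ξ) - z) * (Complex.exp (-(Complex.I * ξ)) - z)) ∧
        (∀ z : ℂ, (T - z • (1 : Matrix (Fin 2) (Fin 2) ℂ)).det = 0 ↔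
            (z = Complex.exp (Complex.I * ξ) ∨ z = Complex.exp (-(Complex.I * ξ)))) := by
  have hρC : (ρ : ℂ) ≠ 0 := by exact_mod_cast hρ0.ne'
  constructor
  · obtain ⟨ξ₀, hξ₀⟩ := Complex.cos_surjective (Complex.cos lam / ρ)
    rcases le_or_gt 0 ξ₀.im with h | h
    · exact ⟨ξ₀, h, by rw [hξ₀]; field_simp⟩
    · refine ⟨-ξ₀, by simp [Complex.neg_im]; linarith, ?_⟩
      rw [Complex.cos_neg, hξ₀]; field_simp
  · intro ξ hξ
    have hαα : (starRingEnd ℂ) α * α = 1 - (ρ : ℂ) ^ 2 := by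
      rw [mul_comm, Complex.mul_conj']
      push_cast
      exact_mod_cast congrArg (Complex.ofReal) hα
    have key : ∀ z : ℂ, (T - z • (1 : Matrix (Fin 2) (Fin 2) ℂ)).det
        = (Complex.exp (Complex.I * ξ) - z) * (Complex.exp (-(Complex.I * ξ)) - z) := by
      intro z
      subst hT
      rw [Matrix.det_fin_two]
      simp only [Matrix.sub_apply, Matrix.smul_apply, Matrix.of_apply, Matrix.cons_val',
        Matrix.cons_val_zero, Matrix.cons_val_one, Matrix.head_cons, Matrix.head_fin_const,
        Matrix.empty_val', Matrix.cons_val_fin_one, Matrix.one_apply_eq, Matrix.one_apply_ne,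
        smul_eq_mul]
      have e1 : Complex.exp (Complex.I * lam) * Complex.exp (-(Complex.I * lam)) = 1 := by
        rw [← Complex.exp_add]; simp
      have e2 : Complex.exp (Complex.I * ξ) * Complex.exp (-(Complex.I * ξ)) = 1 := by
        rw [← Complex.exp_add]; simp
      have c1 : Complex.exp (Complex.I * lam) + Complex.exp (-(Complex.I * lam))
          = 2 * Complex.cos lam := by
        rw [Complex.cos]; ring_nf
      have c2 : Complex.exp (Complex.I * ξ) + Complex.exp (-(Complex.I * ξ))
          = 2 * Complex.cos ξ := by
        rw [Complex.cos]; ring_nf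
      have one01 : (1 : Matrix (Fin 2) (Fin 2) ℂ) 0 1 = 0 := by simp
      have one10 : (1 : Matrix (Fin 2) (Fin 2) ℂ) 1 0 = 0 := by simp
      rw [one01, one10]
      have hinv : (ρ : ℂ)⁻¹ * ρ = 1 := inv_mul_cancel₀ hρC
      linear_combination ((ρ:ℂ)⁻¹)^2 * e1 - ((ρ:ℂ)⁻¹)^2 * hαα - e2
        + ((ρ:ℂ)⁻¹ * ρ + 1) * hinv - (ρ:ℂ)⁻¹ * z * c1 + z * c2
        + 2 * (ρ:ℂ)⁻¹ * z * hξ - 2 * z * Complex.cos ξ * hinv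
    refine ⟨key, fun z => ?_⟩
    rw [key z]
    constructor
    · intro h
      rcases mul_eq_zero.mp h with h | h
      · exact Or.inl (sub_eq_zero.mp h).symm
      · exact Or.inr (sub_eq_zero.mp h).symm
    · rintro (rfl | rfl) <;> simp
end

section
/- Uniform convergence of the modified frequency: for every ε ∈ (0, 1] and every δ > 0 there exists r ∈ ℕ such that for all x ∈ ℤ with |x| ≥ r, all ξ ∈ (0, π) with sin ξ ≥ ε, and all ζ ∈ (0, π) satisfying ρ(x)·cos ζ = ρ_∞·cos ξ, one has |ζ − ξ| < δ. -/
open Complex Filter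

/-- Key inequality: on `(0, π)`, with `sin ξ ≥ ε > 0`, one has
`ε * |ζ - ξ| ≤ π * |cos ζ - cos ξ|`. -/
lemma mfuc_key {ε ξ ζ : ℝ} (hε : 0 < ε)
    (hξ : ξ ∈ Set.Ioo 0 Real.pi) (hζ : ζ ∈ Set.Ioo 0 Real.pi)
    (hsin : ε ≤ Real.sin ξ) :
    ε * |ζ - ξ| ≤ Real.pi * |Real.cos ζ - Real.cos ξ| := by
  obtain ⟨hξ0, hξπ⟩ := hξ
  obtain ⟨hζ0, hζπ⟩ := hζ
  have hπ := Real.pi_pos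
  set m := (ζ + ξ) / 2 with hm
  set d := (ζ - ξ) / 2 with hd
  have hcos : Real.cos ζ - Real.cos ξ = -2 * Real.sin m * Real.sin d :=
    Real.cos_sub_cos ζ ξ
  have hsinadd : Real.sin ζ + Real.sin ξ = 2 * Real.sin m * Real.cos d := by
    have h := Real.sin_sub_sin ζ (-ξ)
    simp only [Real.sin_neg, sub_neg_eq_add] at h
    rw [hm, hd]
    linear_combination h
  have hsinζ : 0 ≤ Real.sin ζ := Real.sin_nonneg_of_nonneg_of_le_pi hζ0.le hζπ.le
  have hsinm : 0 ≤ Real.sin m :=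
    Real.sin_nonneg_of_nonneg_of_le_pi (by rw [hm]; linarith) (by rw [hm]; linarith)
  have hcosd : Real.cos d ≤ 1 := Real.cos_le_one d
  have hsinm2 : ε ≤ 2 * Real.sin m := by nlinarith [mul_le_of_le_one_right hsinm hcosd]
  have hdabs : |d| ≤ Real.pi / 2 := by
    rw [abs_le, hd]
    constructor <;> linarith
  have h1 : 2 / Real.pi * |d| ≤ Real.sin |d| := Real.mul_le_sin (abs_nonneg d) hdabs
  have h2 : Real.sin |d| = |Real.sin d| := by
    rcases le_or_gt 0 d with h | h
    · rw [_root_.abs_of_nonneg h, _root_.abs_of_nonneg]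
      refine Real.sin_nonneg_of_nonneg_of_le_pi h ?_
      have := _root_.abs_of_nonneg h ▸ hdabs
      linarith
    · have hd2 : -d ≤ Real.pi / 2 := by have := abs_of_neg h ▸ hdabs; linarith
      have hneg : 0 ≤ Real.sin (-d) :=
        Real.sin_nonneg_of_nonneg_of_le_pi (by linarith) (by linarith)
      rw [Real.sin_neg] at hneg
      rw [abs_of_neg h, Real.sin_neg, abs_of_nonpos (by linarith)]
  have h3 : |Real.cos ζ - Real.cos ξ| = 2 * Real.sin m * |Real.sin d| := by
    rw [hcos, abs_mul, abs_of_nonpos (by nlinarith : -2 * Real.sin m ≤ 0)]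
    ring
  have heq : |ζ - ξ| = 2 * |d| := by
    have h2' : |(2:ℝ)| = 2 := by norm_num
    rw [hd, abs_div, h2']; ring
  have hπd : 2 * |d| ≤ Real.pi * |Real.sin d| := by
    rw [← h2]
    rw [div_mul_eq_mul_div] at h1
    have := (div_le_iff₀ hπ).mp h1
    linarith
  rw [h3, heq]
  nlinarith [mul_le_mul_of_nonneg_left hπd hε.le,
    mul_le_mul_of_nonneg_right hsinm2 (mul_nonneg hπ.le (abs_nonneg (Real.sin d)))]

/-- Uniform convergence of the modified frequency: for `|x|` large, any solution
`ζ ∈ (0, π)` of `ρ(x) cos ζ = ρ∞ cos ξ` is within `δ` of `ξ`, uniformly for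
`ξ ∈ (0, π)` with `sin ξ ≥ ε`. -/
theorem modified_frequency_uniform_convergence
    (α : ℤ → ℂ)
    (h01 : ∀ x : ℤ, 0 < ‖α x‖) (h02 : ∀ x : ℤ, ‖α x‖ < 1)
    (hsum : Summable fun x : ℤ => ‖α (x + 1) - α x‖)
    (αp αm : ℂ)
    (htop : Tendsto α atTop (nhds αp))
    (hbot : Tendsto α atBot (nhds αm))
    (hpm : ‖αp‖ = ‖αm‖) (h0p : 0 < ‖αp‖) (h1p : ‖αp‖ < 1)
    (ρ : ℤ → ℝ) (hρ : ∀ x : ℤ, ρ x = Real.sqrt (1 - ‖α x‖ ^ 2))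
    (ρinf : ℝ) (hρinf : ρinf = Real.sqrt (1 - ‖αp‖ ^ 2)) :
    ∀ ε δ : ℝ, 0 < ε → ε ≤ 1 → 0 < δ →
      ∃ r : ℕ, ∀ x : ℤ, (r : ℤ) ≤ |x| →
        ∀ ξ : ℝ, ξ ∈ Set.Ioo 0 Real.pi → ε ≤ Real.sin ξ →
          ∀ ζ : ℝ, ζ ∈ Set.Ioo 0 Real.pi → ρ x * Real.cos ζ = ρinf * Real.cos ξ →
            |ζ - ξ| < δ := by
  intro ε δ hε hε1 hδ
  have hπ := Real.pi_pos
  have hρinf_pos : 0 < ρinf := by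
    rw [hρinf]
    apply Real.sqrt_pos.mpr
    nlinarith
  set η := min (ρinf / 2) (ρinf * ε * δ / (4 * Real.pi)) with hη
  have hηpos : 0 < η := by
    apply lt_min (by linarith)
    positivity
  have heqρ : ρ = fun x : ℤ => Real.sqrt (1 - ‖α x‖ ^ 2) := funext hρ
  -- ρ tends to ρinf at both ends
  have hT : Tendsto ρ atTop (nhds ρinf) := by
    have h1 : Tendsto (fun x : ℤ => 1 - ‖α x‖ ^ 2) atTop (nhds (1 - ‖αp‖ ^ 2)) :=
      tendsto_const_nhds.sub (htop.norm.pow 2)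
    have h2 := (Real.continuous_sqrt.tendsto _).comp h1
    rw [heqρ, hρinf]
    exact h2
  have hB : Tendsto ρ atBot (nhds ρinf) := by
    have h1 : Tendsto (fun x : ℤ => 1 - ‖α x‖ ^ 2) atBot (nhds (1 - ‖αp‖ ^ 2)) := by
      rw [hpm]
      exact tendsto_const_nhds.sub (hbot.norm.pow 2)
    have h2 := (Real.continuous_sqrt.tendsto _).comp h1
    rw [heqρ, hρinf]
    exact h2
  obtain ⟨N₁, hN₁⟩ := (Metric.tendsto_atTop.mp hT) η hηpos
  have hB' : Tendsto (fun n : ℤ => ρ (-n)) atTop (nhds ρinf) :=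
    hB.comp tendsto_neg_atTop_atBot
  obtain ⟨N₂, hN₂⟩ := (Metric.tendsto_atTop.mp hB') η hηpos
  refine ⟨N₁.toNat + N₂.natAbs, fun x hx ξ hξ hsinξ ζ hζ heq => ?_⟩
  -- ρ x is close to ρinf
  have hclose : |ρ x - ρinf| < η := by
    rcases le_or_gt 0 x with hx0 | hx0
    · have hle : N₁ ≤ x := by
        rw [abs_of_nonneg hx0] at hx
        omega
      simpa [Real.dist_eq] using hN₁ x hle
    · have hle : N₂ ≤ -x := by
        rw [abs_of_neg hx0] at hx
        omega
      simpa [Real.dist_eq] using hN₂ (-x) hle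
  have hηle1 : η ≤ ρinf / 2 := min_le_left _ _
  have hηle2 : η * (4 * Real.pi) ≤ ρinf * ε * δ :=
    (le_div_iff₀ (by positivity)).mp (min_le_right _ _)
  have hρx_pos : ρinf / 2 ≤ ρ x := by
    have := abs_lt.mp hclose
    linarith
  -- bound |cos ζ - cos ξ|
  set A := |Real.cos ζ - Real.cos ξ| with hA
  have hcosξ : |Real.cos ξ| ≤ 1 := Real.abs_cos_le_one ξ
  have hkey : ρ x * (Real.cos ζ - Real.cos ξ) = (ρinf - ρ x) * Real.cos ξ := by
    rw [mul_sub, heq]; ring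
  have h1 : ρ x * A = |ρinf - ρ x| * |Real.cos ξ| := by
    have habs : |ρ x * (Real.cos ζ - Real.cos ξ)| = |(ρinf - ρ x) * Real.cos ξ| := by
      rw [hkey]
    rw [abs_mul, abs_mul, _root_.abs_of_pos (show (0:ℝ) < ρ x by linarith)] at habs
    rw [hA]
    exact habs
  have h2 : |ρinf - ρ x| < η := by rw [abs_sub_comm]; exact hclose
  have h3 : ρ x * A ≤ η := by
    calc ρ x * A = |ρinf - ρ x| * |Real.cos ξ| := h1
      _ ≤ η * 1 := mul_le_mul h2.le hcosξ (abs_nonneg _) hηpos.le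
      _ = η := mul_one η
  have h4 : (ρinf / 2) * A ≤ η :=
    le_trans (mul_le_mul_of_nonneg_right hρx_pos (abs_nonneg _)) h3
  have h5 : Real.pi * A ≤ ε * δ / 2 := by
    nlinarith [mul_le_mul_of_nonneg_left h4 (show (0:ℝ) ≤ 4 * Real.pi by positivity),
      abs_nonneg (Real.cos ζ - Real.cos ξ)]
  have hmain := mfuc_key hε hξ hζ hsinξ
  have h6 : ε * |ζ - ξ| ≤ ε * δ / 2 := hmain.trans h5
  nlinarith [mul_pos hε hδ]
end

section
/- Quantitative closeness of the modified frequency to ξ: for every ε ∈ (0, 1] there exist r ∈ ℕ and M > 0 such that: for all x ∈ ℤ with x ≥ r, all ξ ∈ (0, π) with sin ξ ≥ ε, and all ζ ∈ (0, π) with ρ(x)·cos ζ = ρ_∞·cos ξ, one has |ζ − ξ| ≤ M·ε⁻¹·|α(x) − α₊|; and for all x ∈ ℤ with x ≤ −r, all such ξ and all ζ ∈ (0, π) with ρ(x)·cos ζ = ρ_∞·cos ξ, one has |ζ − ξ| ≤ M·ε⁻¹·|α(x) − α₋|. -/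
open Complex Filter

private lemma sin_midpoint_ge {a b : ℝ} (ha : a ∈ Set.Icc 0 Real.pi)
    (hb : b ∈ Set.Icc 0 Real.pi) :
    min (Real.sin a) (Real.sin b) ≤ Real.sin ((a + b) / 2) := by
  have h := strictConcaveOn_sin_Icc.concaveOn.2 ha hb
    (by norm_num : (0:ℝ) ≤ 1/2) (by norm_num : (0:ℝ) ≤ 1/2) (by norm_num)
  simp only [smul_eq_mul] at h
  have he : (1/2 : ℝ) * a + (1/2 : ℝ) * b = (a + b) / 2 := by ring
  rw [he] at h
  rcases le_total (Real.sin a) (Real.sin b) with hab | hab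
  · simp only [min_eq_left hab]; linarith
  · simp only [min_eq_right hab]; linarith

set_option maxHeartbeats 1000000 in
private lemma key_estimate (ε ρx ρi ξ ζ : ℝ) (hε : 0 < ε) (hε1 : ε ≤ 1) (hρi : 0 < ρi)
    (hclose : |ρx - ρi| ≤ ρi * ε ^ 2 / 5)
    (hξ : ξ ∈ Set.Ioo 0 Real.pi) (hsξ : ε ≤ Real.sin ξ)
    (hζ : ζ ∈ Set.Ioo 0 Real.pi) (heq : ρx * Real.cos ζ = ρi * Real.cos ξ) :
    |ζ - ξ| ≤ 2 * Real.pi / ρi * ε⁻¹ * |ρx - ρi| := by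
  obtain ⟨hξ1, hξ2⟩ := hξ
  obtain ⟨hζ1, hζ2⟩ := hζ
  have hπ := Real.pi_pos
  have habs := abs_le.1 hclose
  have hε2 : ε ^ 2 ≤ 1 := by nlinarith
  have hε20 : 0 < ε ^ 2 := by positivity
  have hre : ρi * ε ^ 2 ≤ ρi := by nlinarith
  have hρx : ρi * (1 - ε ^ 2 / 5) ≤ ρx := by nlinarith
  have hρx0 : 0 < ρx := by nlinarith
  have hsζ0 : 0 ≤ Real.sin ζ := Real.sin_nonneg_of_nonneg_of_le_pi hζ1.le hζ2.le
  have hpζ := Real.sin_sq_add_cos_sq ζ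
  have hpξ := Real.sin_sq_add_cos_sq ξ
  have hsξ1 : Real.sin ξ ≤ 1 := Real.sin_le_one ξ
  have hsq : ρx ^ 2 * Real.cos ζ ^ 2 = ρi ^ 2 * Real.cos ξ ^ 2 := by
    linear_combination (ρx * Real.cos ζ + ρi * Real.cos ξ) * heq
  have h1 : Real.cos ξ ^ 2 ≤ 1 - ε ^ 2 := by nlinarith
  have hfac : (0:ℝ) < 1 - ε ^ 2 / 5 := by nlinarith
  have h2 : ρi ^ 2 * (1 - ε ^ 2 / 5) ^ 2 ≤ ρx ^ 2 := by
    have := pow_le_pow_left₀ (by positivity) hρx 2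
    calc ρi ^ 2 * (1 - ε ^ 2 / 5) ^ 2 = (ρi * (1 - ε ^ 2 / 5)) ^ 2 := by ring
      _ ≤ ρx ^ 2 := this
  have hP : (0:ℝ) < ρi ^ 2 * (1 - ε ^ 2 / 5) ^ 2 := by positivity
  have h3 : Real.cos ζ ^ 2 * (ρi ^ 2 * (1 - ε ^ 2 / 5) ^ 2) ≤ ρi ^ 2 * (1 - ε ^ 2) := by
    have hcc : Real.cos ζ ^ 2 * (ρi ^ 2 * (1 - ε ^ 2 / 5) ^ 2) ≤ Real.cos ζ ^ 2 * ρx ^ 2 :=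
      mul_le_mul_of_nonneg_left h2 (sq_nonneg _)
    have hcc2 : Real.cos ζ ^ 2 * ρx ^ 2 ≤ ρi ^ 2 * (1 - ε ^ 2) := by nlinarith [sq_nonneg ρi]
    linarith
  have hpoly : (1 - ε ^ 2) ≤ (1 - ε ^ 2 / 4) * (1 - ε ^ 2 / 5) ^ 2 := by
    nlinarith [mul_pos hε20 hε20, mul_pos (mul_pos hε20 hε20) hε20]
  have h4 : Real.cos ζ ^ 2 ≤ 1 - ε ^ 2 / 4 := by
    have h3' : Real.cos ζ ^ 2 * (ρi ^ 2 * (1 - ε ^ 2 / 5) ^ 2) ≤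
        (1 - ε ^ 2 / 4) * (ρi ^ 2 * (1 - ε ^ 2 / 5) ^ 2) := by
      refine h3.trans ?_
      have := mul_le_mul_of_nonneg_left hpoly (sq_nonneg ρi)
      calc ρi ^ 2 * (1 - ε ^ 2) ≤ ρi ^ 2 * ((1 - ε ^ 2 / 4) * (1 - ε ^ 2 / 5) ^ 2) := this
        _ = (1 - ε ^ 2 / 4) * (ρi ^ 2 * (1 - ε ^ 2 / 5) ^ 2) := by ring
    exact le_of_mul_le_mul_right h3' hP
  have hsζ : ε / 2 ≤ Real.sin ζ := by nlinarith
  -- midpoint sine lower bound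
  have hm : ε / 2 ≤ Real.sin ((ζ + ξ) / 2) := by
    refine le_trans (le_min hsζ (by linarith)) (sin_midpoint_ge ⟨hζ1.le, hζ2.le⟩ ⟨hξ1.le, hξ2.le⟩)
  -- cosine difference formula
  have hcd : Real.cos ζ - Real.cos ξ = -2 * Real.sin ((ζ + ξ) / 2) * Real.sin ((ζ - ξ) / 2) :=
    Real.cos_sub_cos ζ ξ
  -- Jordan bound
  have hdlt : |ζ - ξ| < Real.pi := abs_lt.2 ⟨by linarith, by linarith⟩
  have habs2 : |(ζ - ξ) / 2| = |ζ - ξ| / 2 := by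
    rw [abs_div]; norm_num
  have hjord : 2 / Real.pi * (|ζ - ξ| / 2) ≤ |Real.sin ((ζ - ξ) / 2)| := by
    have := Real.mul_abs_le_abs_sin (x := (ζ - ξ) / 2) (by rw [habs2]; linarith)
    rwa [habs2] at this
  -- lower bound on |cos ζ - cos ξ|
  have hlb : ε / Real.pi * |ζ - ξ| ≤ |Real.cos ζ - Real.cos ξ| := by
    rw [hcd]
    rw [abs_mul, abs_mul]
    have hmabs : |Real.sin ((ζ + ξ) / 2)| = Real.sin ((ζ + ξ) / 2) :=
      abs_of_nonneg (by linarith)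
    rw [hmabs]
    have h2' : |(-2 : ℝ)| = 2 := by norm_num
    rw [h2']
    calc ε / Real.pi * |ζ - ξ| = 2 * (ε / 2) * (2 / Real.pi * (|ζ - ξ| / 2)) := by ring
      _ ≤ 2 * Real.sin ((ζ + ξ) / 2) * |Real.sin ((ζ - ξ) / 2)| := by
          apply mul_le_mul (by linarith) hjord (by positivity) (by linarith)
  -- upper bound on |cos ζ - cos ξ|
  have he : (Real.cos ζ - Real.cos ξ) * ρx = (ρi - ρx) * Real.cos ξ := by nlinarith [heq]
  have hub : |Real.cos ζ - Real.cos ξ| * ρx ≤ |ρx - ρi| := by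
    have := congrArg (fun t : ℝ => |t|) he
    rw [abs_mul, abs_mul, abs_of_pos hρx0] at this
    rw [this, abs_sub_comm ρi ρx]
    calc |ρx - ρi| * |Real.cos ξ| ≤ |ρx - ρi| * 1 :=
          mul_le_mul_of_nonneg_left (Real.abs_cos_le_one ξ) (abs_nonneg _)
      _ = |ρx - ρi| := mul_one _
  have hub2 : |Real.cos ζ - Real.cos ξ| ≤ 2 / ρi * |ρx - ρi| := by
    have hhalf : ρi / 2 ≤ ρx := by nlinarith
    have h0 : 0 ≤ |Real.cos ζ - Real.cos ξ| := abs_nonneg _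
    rw [div_mul_eq_mul_div, le_div_iff₀ hρi]
    nlinarith [mul_le_mul_of_nonneg_left hhalf h0]
  -- combine
  have hfinal : ε / Real.pi * |ζ - ξ| ≤ 2 / ρi * |ρx - ρi| := le_trans hlb hub2
  calc |ζ - ξ| = Real.pi / ε * (ε / Real.pi * |ζ - ξ|) := by field_simp
    _ ≤ Real.pi / ε * (2 / ρi * |ρx - ρi|) :=
        mul_le_mul_of_nonneg_left hfinal (by positivity)
    _ = 2 * Real.pi / ρi * ε⁻¹ * |ρx - ρi| := by field_simp

private lemma rho_close (a b : ℂ) (ha : ‖a‖ < 1) (hb : ‖b‖ < 1) :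
    |Real.sqrt (1 - ‖a‖ ^ 2) - Real.sqrt (1 - ‖b‖ ^ 2)| ≤
      2 * ‖a - b‖ / Real.sqrt (1 - ‖b‖ ^ 2) := by
  set x := Real.sqrt (1 - ‖a‖ ^ 2) with hx
  set y := Real.sqrt (1 - ‖b‖ ^ 2) with hy
  have ha0 := norm_nonneg a
  have hb0 := norm_nonneg b
  have hx0 : 0 ≤ x := Real.sqrt_nonneg _
  have hy0 : 0 < y := Real.sqrt_pos.2 (by nlinarith)
  have hx2 : x ^ 2 = 1 - ‖a‖ ^ 2 := Real.sq_sqrt (by nlinarith)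
  have hy2 : y ^ 2 = 1 - ‖b‖ ^ 2 := Real.sq_sqrt (by nlinarith)
  have hd := abs_le.1 (abs_norm_sub_norm_le a b)
  rw [div_eq_mul_inv, ← div_eq_mul_inv, le_div_iff₀ hy0]
  have h1 : |x - y| * (x + y) = |x ^ 2 - y ^ 2| := by
    rw [show |x - y| * (x + y) = |x - y| * |x + y| by
      rw [_root_.abs_of_nonneg (show (0:ℝ) ≤ x + y by linarith)], ← abs_mul]
    ring_nf
  have h2 : |x ^ 2 - y ^ 2| = |‖b‖ - ‖a‖| * (‖b‖ + ‖a‖) := by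
    rw [hx2, hy2, show 1 - ‖a‖ ^ 2 - (1 - ‖b‖ ^ 2) = (‖b‖ - ‖a‖) * (‖b‖ + ‖a‖) by ring,
      abs_mul, _root_.abs_of_nonneg (by linarith : (0:ℝ) ≤ ‖b‖ + ‖a‖)]
  have h3 : |‖b‖ - ‖a‖| ≤ ‖a - b‖ := by
    rw [abs_sub_comm]; exact abs_norm_sub_norm_le a b
  have h4 : |x - y| * (x + y) ≤ 2 * ‖a - b‖ := by
    rw [h1, h2]
    calc |‖b‖ - ‖a‖| * (‖b‖ + ‖a‖) ≤ ‖a - b‖ * 2 :=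
          mul_le_mul h3 (by linarith) (by linarith) (norm_nonneg _)
      _ = 2 * ‖a - b‖ := by ring
  nlinarith [abs_nonneg (x - y), mul_le_mul_of_nonneg_left (show y ≤ x + y by linarith) (abs_nonneg (x - y))]

/-- Quantitative closeness of the modified frequency to `ξ`:
`|ζ − ξ| ≤ M ε⁻¹ |α(x) − α₊|` for `x ≥ r` and `|ζ − ξ| ≤ M ε⁻¹ |α(x) − α₋|` for `x ≤ −r`. -/
theorem modified_frequency_quantitative
    (α : ℤ → ℂ)
    (h01 : ∀ x : ℤ, 0 < ‖α x‖) (h02 : ∀ x : ℤ, ‖α x‖ < 1)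
    (hsum : Summable fun x : ℤ => ‖α (x + 1) - α x‖)
    (αp αm : ℂ)
    (htop : Tendsto α atTop (nhds αp))
    (hbot : Tendsto α atBot (nhds αm))
    (hpm : ‖αp‖ = ‖αm‖) (h0p : 0 < ‖αp‖) (h1p : ‖αp‖ < 1)
    (ρ : ℤ → ℝ) (hρ : ∀ x : ℤ, ρ x = Real.sqrt (1 - ‖α x‖ ^ 2))
    (ρinf : ℝ) (hρinf : ρinf = Real.sqrt (1 - ‖αp‖ ^ 2)) :
    ∀ ε : ℝ, 0 < ε → ε ≤ 1 →
      ∃ r : ℕ, ∃ M : ℝ, 0 < M ∧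
        (∀ x : ℤ, (r : ℤ) ≤ x →
          ∀ ξ : ℝ, ξ ∈ Set.Ioo 0 Real.pi → ε ≤ Real.sin ξ →
            ∀ ζ : ℝ, ζ ∈ Set.Ioo 0 Real.pi → ρ x * Real.cos ζ = ρinf * Real.cos ξ →
              |ζ - ξ| ≤ M * ε⁻¹ * ‖α x - αp‖) ∧
        (∀ x : ℤ, x ≤ -(r : ℤ) →
          ∀ ξ : ℝ, ξ ∈ Set.Ioo 0 Real.pi → ε ≤ Real.sin ξ →
            ∀ ζ : ℝ, ζ ∈ Set.Ioo 0 Real.pi → ρ x * Real.cos ζ = ρinf * Real.cos ξ →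
              |ζ - ξ| ≤ M * ε⁻¹ * ‖α x - αm‖) := by
  intro ε hε hε1
  have h1m : ‖αm‖ < 1 := hpm ▸ h1p
  have hρi0 : 0 < ρinf := by
    rw [hρinf]
    exact Real.sqrt_pos.2 (by nlinarith [norm_nonneg αp])
  have hρinfm : ρinf = Real.sqrt (1 - ‖αm‖ ^ 2) := by rw [hρinf, hpm]
  set δ : ℝ := ρinf ^ 2 * ε ^ 2 / 20 with hδdef
  have hδ : 0 < δ := by positivity
  obtain ⟨a, ha⟩ := eventually_atTop.1 (htop (Metric.closedBall_mem_nhds αp hδ))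
  obtain ⟨b, hb⟩ := eventually_atBot.1 (hbot (Metric.closedBall_mem_nhds αm hδ))
  refine ⟨(max a (-b)).toNat, 4 * Real.pi / ρinf ^ 2, by positivity, ?_, ?_⟩
  all_goals intro x hx ξ hξ hsξ ζ hζ heq
  · -- x ≥ r
    have hxa : a ≤ x :=
      le_trans (le_trans (le_max_left a (-b)) (Int.self_le_toNat _)) hx
    have hdist : ‖α x - αp‖ ≤ δ := by
      have := ha x hxa
      rwa [Metric.mem_closedBall, dist_eq_norm] at this
    have hρc : |ρ x - ρinf| ≤ 2 * ‖α x - αp‖ / ρinf := by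
      rw [hρ x, hρinf]
      exact rho_close (α x) αp (h02 x) h1p
    have hρc5 : |ρ x - ρinf| ≤ ρinf * ε ^ 2 / 5 := by
      refine hρc.trans ?_
      rw [div_le_iff₀ hρi0]
      nlinarith
    have hkey := key_estimate ε (ρ x) ρinf ξ ζ hε hε1 hρi0 hρc5 hξ hsξ hζ heq
    refine hkey.trans ?_
    calc 2 * Real.pi / ρinf * ε⁻¹ * |ρ x - ρinf|
        ≤ 2 * Real.pi / ρinf * ε⁻¹ * (2 * ‖α x - αp‖ / ρinf) := by
          apply mul_le_mul_of_nonneg_left hρc (by positivity)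
      _ = 4 * Real.pi / ρinf ^ 2 * ε⁻¹ * ‖α x - αp‖ := by
          field_simp; ring
  · -- x ≤ -r
    have hxb : x ≤ b := by
      have h1 : -b ≤ ((max a (-b)).toNat : ℤ) :=
        le_trans (le_max_right a (-b)) (Int.self_le_toNat _)
      linarith
    have hdist : ‖α x - αm‖ ≤ δ := by
      have := hb x hxb
      rwa [Metric.mem_closedBall, dist_eq_norm] at this
    have hρc : |ρ x - ρinf| ≤ 2 * ‖α x - αm‖ / ρinf := by
      rw [hρ x, hρinfm]
      exact rho_close (α x) αm (h02 x) h1m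
    have hρc5 : |ρ x - ρinf| ≤ ρinf * ε ^ 2 / 5 := by
      refine hρc.trans ?_
      rw [div_le_iff₀ hρi0]
      nlinarith
    have hkey := key_estimate ε (ρ x) ρinf ξ ζ hε hε1 hρi0 hρc5 hξ hsξ hζ heq
    refine hkey.trans ?_
    calc 2 * Real.pi / ρinf * ε⁻¹ * |ρ x - ρinf|
        ≤ 2 * Real.pi / ρinf * ε⁻¹ * (2 * ‖α x - αm‖ / ρinf) := by
          apply mul_le_mul_of_nonneg_left hρc (by positivity)
      _ = 4 * Real.pi / ρinf ^ 2 * ε⁻¹ * ‖α x - αm‖ := by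
          field_simp; ring
end

section
/- Summability of increments of the modified frequency: for every ε ∈ (0, 1] there exist r ∈ ℕ and M > 0 such that for every x ∈ ℤ with either x ≥ r or x + 1 ≤ −r, every ξ ∈ (0, π) with sin ξ ≥ ε, and every ζ₁, ζ₂ ∈ (0, π) with ρ(x)·cos ζ₁ = ρ_∞·cos ξ and ρ(x+1)·cos ζ₂ = ρ_∞·cos ξ, one has |ζ₂ − ζ₁| ≤ M·ε⁻¹·|α(x+1) − α(x)|. In particular, if ζ : {x ∈ ℤ : |x| ≥ r} → (0, π) satisfies ρ(x)·cos ζ(x) = ρ_∞·cos ξ for all |x| ≥ r, then ∑_{x ≥ r} |ζ(x+1) − ζ(x)| < ∞ and ∑_{x ≤ −r−1} |ζ(x+1) − ζ(x)| < ∞. -/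
set_option maxHeartbeats 1000000



private lemma aux_sin_add_sin (x y : ℝ) :
    Real.sin x + Real.sin y = 2 * Real.sin ((x + y) / 2) * Real.cos ((x - y) / 2) := by
  have h1 := Real.sin_add ((x + y) / 2) ((x - y) / 2)
  have h2 := Real.sin_sub ((x + y) / 2) ((x - y) / 2)
  have e1 : (x + y) / 2 + (x - y) / 2 = x := by ring
  have e2 : (x + y) / 2 - (x - y) / 2 = y := by ring
  rw [e1] at h1; rw [e2] at h2; linarith

private lemma aux_sq_le {a b : ℝ} (ha : 0 ≤ a) (hb : 0 ≤ b) (h : a ^ 2 ≤ b ^ 2) : a ≤ b := by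
  have := Real.sqrt_le_sqrt h
  rwa [Real.sqrt_sq ha, Real.sqrt_sq hb] at this

private lemma aux_key (P ε ξ ζ₁ ζ₂ ρ1 ρ2 : ℝ)
    (hP : 0 < P) (hP1 : P ≤ 1) (hε : 0 < ε) (hε1 : ε ≤ 1)
    (hρ1u : ρ1 ≤ 1) (hρ2u : ρ2 ≤ 1)
    (h1 : P ^ 2 * (1 - ε ^ 2 / 2) ≤ ρ1 ^ 2) (h2 : P ^ 2 * (1 - ε ^ 2 / 2) ≤ ρ2 ^ 2)
    (hρ1p : 0 < ρ1) (hρ2p : 0 < ρ2)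
    (hξ : ξ ∈ Set.Ioo 0 Real.pi) (hsξ : ε ≤ Real.sin ξ)
    (hζ₁ : ζ₁ ∈ Set.Ioo 0 Real.pi) (hζ₂ : ζ₂ ∈ Set.Ioo 0 Real.pi)
    (e1 : ρ1 * Real.cos ζ₁ = P * Real.cos ξ)
    (e2 : ρ2 * Real.cos ζ₂ = P * Real.cos ξ) :
    |ζ₂ - ζ₁| ≤ (4 * Real.pi / P ^ 4) * ε⁻¹ * |ρ1 ^ 2 - ρ2 ^ 2| := by
  obtain ⟨hξ0, hξπ⟩ := hξ
  obtain ⟨hz10, hz1π⟩ := hζ₁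
  obtain ⟨hz20, hz2π⟩ := hζ₂
  have hπ := Real.pi_pos
  -- lower bounds on sines of ζ₁, ζ₂
  have hsin1pos : 0 < Real.sin ζ₁ := Real.sin_pos_of_pos_of_lt_pi hz10 hz1π
  have hsin2pos : 0 < Real.sin ζ₂ := Real.sin_pos_of_pos_of_lt_pi hz20 hz2π
  have pyth1 := Real.sin_sq_add_cos_sq ζ₁
  have pyth2 := Real.sin_sq_add_cos_sq ζ₂
  have e1' : (ρ1 * Real.cos ζ₁) ^ 2 = (P * Real.cos ξ) ^ 2 := by rw [e1]
  have e2' : (ρ2 * Real.cos ζ₂) ^ 2 = (P * Real.cos ξ) ^ 2 := by rw [e2]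
  have hsξ2 : ε ^ 2 ≤ Real.sin ξ ^ 2 := by
    rw [pow_two, pow_two]
    exact mul_le_mul hsξ hsξ hε.le (le_trans hε.le hsξ)
  have hPs : P ^ 2 * ε ^ 2 ≤ P ^ 2 * Real.sin ξ ^ 2 :=
    mul_le_mul_of_nonneg_left hsξ2 (sq_nonneg P)
  have key1 : ρ1 ^ 2 * Real.sin ζ₁ ^ 2 = ρ1 ^ 2 - P ^ 2 * Real.cos ξ ^ 2 := by
    linear_combination ρ1 ^ 2 * pyth1 - e1'
  have key2 : ρ2 ^ 2 * Real.sin ζ₂ ^ 2 = ρ2 ^ 2 - P ^ 2 * Real.cos ξ ^ 2 := by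
    linear_combination ρ2 ^ 2 * pyth2 - e2'
  have hP2ξ : P ^ 2 * Real.sin ξ ^ 2 + P ^ 2 * Real.cos ξ ^ 2 = P ^ 2 := by
    linear_combination P ^ 2 * Real.sin_sq_add_cos_sq ξ
  have hm1 : (0:ℝ) ≤ Real.sin ζ₁ ^ 2 * (1 - ρ1 ^ 2) :=
    mul_nonneg (sq_nonneg _) (sub_nonneg.mpr (pow_le_one₀ hρ1p.le hρ1u))
  have hm2 : (0:ℝ) ≤ Real.sin ζ₂ ^ 2 * (1 - ρ2 ^ 2) :=
    mul_nonneg (sq_nonneg _) (sub_nonneg.mpr (pow_le_one₀ hρ2p.le hρ2u))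
  have hsq1 : (P * ε / 2) ^ 2 ≤ Real.sin ζ₁ ^ 2 := by
    linarith [hm1, key1, hPs, hP2ξ, h1, sq_nonneg (P * ε)]
  have hsq2 : (P * ε / 2) ^ 2 ≤ Real.sin ζ₂ ^ 2 := by
    linarith [hm2, key2, hPs, hP2ξ, h2, sq_nonneg (P * ε)]
  have hPε : (0:ℝ) < P * ε / 2 := by positivity
  have hsin1 : P * ε / 2 ≤ Real.sin ζ₁ := aux_sq_le hPε.le hsin1pos.le hsq1
  have hsin2 : P * ε / 2 ≤ Real.sin ζ₂ := aux_sq_le hPε.le hsin2pos.le hsq2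
  -- midpoint sine bound
  have hms : 0 < Real.sin ((ζ₂ + ζ₁) / 2) :=
    Real.sin_pos_of_pos_of_lt_pi (by linarith) (by linarith)
  have hmid : Real.sin ζ₂ + Real.sin ζ₁ ≤ 2 * Real.sin ((ζ₂ + ζ₁) / 2) := by
    rw [aux_sin_add_sin ζ₂ ζ₁]
    have h := mul_le_mul_of_nonneg_left (Real.cos_le_one ((ζ₂ - ζ₁) / 2))
      (by linarith : (0:ℝ) ≤ 2 * Real.sin ((ζ₂ + ζ₁) / 2))
    linarith [h]
  have hsm : P * ε / 2 ≤ Real.sin ((ζ₂ + ζ₁) / 2) := by linarith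
  -- product formula for cos difference
  have habs : |Real.cos ζ₂ - Real.cos ζ₁|
      = 2 * Real.sin ((ζ₂ + ζ₁) / 2) * |Real.sin ((ζ₂ - ζ₁) / 2)| := by
    rw [Real.cos_sub_cos, abs_mul, abs_mul]
    rw [abs_of_nonneg hms.le]
    norm_num
  have hd2 : |(ζ₂ - ζ₁) / 2| ≤ Real.pi / 2 := by
    rw [abs_le]; constructor <;> linarith
  have hlin : 2 / Real.pi * |(ζ₂ - ζ₁) / 2| ≤ |Real.sin ((ζ₂ - ζ₁) / 2)| :=
    Real.mul_abs_le_abs_sin hd2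
  have habs2 : |(ζ₂ - ζ₁) / 2| = |ζ₂ - ζ₁| / 2 := by
    rw [abs_div]; norm_num
  -- chain 1 : P * ε * |ζ₂ - ζ₁| ≤ π * |Δ cos|
  have chain1 : P * ε * |ζ₂ - ζ₁| ≤ Real.pi * |Real.cos ζ₂ - Real.cos ζ₁| := by
    rw [habs]
    rw [habs2] at hlin
    have t3 : (P * ε / 2) * (2 / Real.pi * (|ζ₂ - ζ₁| / 2))
        ≤ Real.sin ((ζ₂ + ζ₁) / 2) * |Real.sin ((ζ₂ - ζ₁) / 2)| :=
      mul_le_mul hsm hlin (by positivity) hms.le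
    have t4 := mul_le_mul_of_nonneg_left t3 (by positivity : (0:ℝ) ≤ 2 * Real.pi)
    have t5 : 2 * Real.pi * ((P * ε / 2) * (2 / Real.pi * (|ζ₂ - ζ₁| / 2)))
        = P * ε * |ζ₂ - ζ₁| := by field_simp
    have t6 : 2 * Real.pi * (Real.sin ((ζ₂ + ζ₁) / 2) * |Real.sin ((ζ₂ - ζ₁) / 2)|)
        = Real.pi * (2 * Real.sin ((ζ₂ + ζ₁) / 2) * |Real.sin ((ζ₂ - ζ₁) / 2)|) := by ring
    linarith [t4, t5.symm.le, t6.symm.le]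
  -- chain 2 : P^3 * |Δ cos| ≤ 4 * |ρ1² - ρ2²|
  have hε2 : ε ^ 2 ≤ 1 := pow_le_one₀ hε.le hε1
  have hq : P ^ 2 * (1 / 4) ≤ P ^ 2 * (1 - ε ^ 2 / 2) :=
    mul_le_mul_of_nonneg_left (by linarith) (sq_nonneg P)
  have hρ1l : P / 2 ≤ ρ1 := by
    refine aux_sq_le (by positivity) hρ1p.le ?_
    linarith [hq, h1]
  have hρ2l : P / 2 ≤ ρ2 := by
    refine aux_sq_le (by positivity) hρ2p.le ?_
    linarith [hq, h2]
  have hprod : ρ1 * ρ2 * (Real.cos ζ₂ - Real.cos ζ₁) = P * Real.cos ξ * (ρ1 - ρ2) := by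
    linear_combination ρ1 * e2 - ρ2 * e1
  have hprodabs : ρ1 * ρ2 * |Real.cos ζ₂ - Real.cos ζ₁| = |P * Real.cos ξ| * |ρ1 - ρ2| := by
    have habs' : ρ1 * ρ2 * |Real.cos ζ₂ - Real.cos ζ₁|
        = |ρ1 * ρ2 * (Real.cos ζ₂ - Real.cos ζ₁)| := by
      rw [abs_mul, abs_mul, abs_of_pos hρ1p, abs_of_pos hρ2p]
    rw [habs', hprod, abs_mul]
  have hPcos : |P * Real.cos ξ| ≤ 1 := by
    rw [abs_mul, abs_of_pos hP]
    calc P * |Real.cos ξ| ≤ 1 * 1 :=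
          mul_le_mul hP1 (Real.abs_cos_le_one ξ) (abs_nonneg _) (by norm_num)
      _ = 1 := by norm_num
  have hfact : |ρ1 - ρ2| * (ρ1 + ρ2) = |ρ1 ^ 2 - ρ2 ^ 2| := by
    rw [← abs_of_pos (show (0:ℝ) < ρ1 + ρ2 by linarith), ← abs_mul]
    exact congrArg abs (by ring)
  have hrr : P ^ 3 / 4 ≤ ρ1 * ρ2 * (ρ1 + ρ2) := by
    have A : (P / 2) * (P / 2) ≤ ρ1 * ρ2 :=
      mul_le_mul hρ1l hρ2l (by positivity) (by linarith)
    have B : P / 2 + P / 2 ≤ ρ1 + ρ2 := by linarith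
    have C := mul_le_mul A B (by positivity) (mul_nonneg hρ1p.le hρ2p.le)
    linarith [C]
  have chain2 : P ^ 3 * |Real.cos ζ₂ - Real.cos ζ₁| ≤ 4 * |ρ1 ^ 2 - ρ2 ^ 2| := by
    have step : ρ1 * ρ2 * (ρ1 + ρ2) * |Real.cos ζ₂ - Real.cos ζ₁| ≤ |ρ1 ^ 2 - ρ2 ^ 2| := by
      calc ρ1 * ρ2 * (ρ1 + ρ2) * |Real.cos ζ₂ - Real.cos ζ₁|
          = (ρ1 * ρ2 * |Real.cos ζ₂ - Real.cos ζ₁|) * (ρ1 + ρ2) := by ring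
        _ = |P * Real.cos ξ| * |ρ1 - ρ2| * (ρ1 + ρ2) := by rw [hprodabs]
        _ = |P * Real.cos ξ| * (|ρ1 - ρ2| * (ρ1 + ρ2)) := by ring
        _ = |P * Real.cos ξ| * |ρ1 ^ 2 - ρ2 ^ 2| := by rw [hfact]
        _ ≤ 1 * |ρ1 ^ 2 - ρ2 ^ 2| := mul_le_mul_of_nonneg_right hPcos (abs_nonneg _)
        _ = |ρ1 ^ 2 - ρ2 ^ 2| := by ring
    have u := mul_le_mul_of_nonneg_right hrr (abs_nonneg (Real.cos ζ₂ - Real.cos ζ₁))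
    linarith [u, step]
  -- combine
  have final : P ^ 4 * ε * |ζ₂ - ζ₁| ≤ 4 * Real.pi * |ρ1 ^ 2 - ρ2 ^ 2| := by
    have u1 := mul_le_mul_of_nonneg_left chain1 (pow_nonneg hP.le 3)
    have u2 := mul_le_mul_of_nonneg_left chain2 hπ.le
    linarith [u1, u2]
  have hgoal : (4 * Real.pi / P ^ 4) * ε⁻¹ * |ρ1 ^ 2 - ρ2 ^ 2|
      = (4 * Real.pi * |ρ1 ^ 2 - ρ2 ^ 2|) / (P ^ 4 * ε) := by
    field_simp
  rw [hgoal, le_div_iff₀ (by positivity)]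
  calc |ζ₂ - ζ₁| * (P ^ 4 * ε) = P ^ 4 * ε * |ζ₂ - ζ₁| := by ring
    _ ≤ 4 * Real.pi * |ρ1 ^ 2 - ρ2 ^ 2| := final



open Complex Filter

/-- Summability of increments of the modified frequency:
`|ζ(x+1) − ζ(x)| ≤ M ε⁻¹ |α(x+1) − α(x)|` near infinity; in particular the
increments of any modified frequency are summable near `±∞`. -/
theorem modified_frequency_increments_summable
    (α : ℤ → ℂ)
    (h01 : ∀ x : ℤ, 0 < ‖α x‖) (h02 : ∀ x : ℤ, ‖α x‖ < 1)
    (hsum : Summable fun x : ℤ => ‖α (x + 1) - α x‖)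
    (αp αm : ℂ)
    (htop : Tendsto α atTop (nhds αp))
    (hbot : Tendsto α atBot (nhds αm))
    (hpm : ‖αp‖ = ‖αm‖) (h0p : 0 < ‖αp‖) (h1p : ‖αp‖ < 1)
    (ρ : ℤ → ℝ) (hρ : ∀ x : ℤ, ρ x = Real.sqrt (1 - ‖α x‖ ^ 2))
    (ρinf : ℝ) (hρinf : ρinf = Real.sqrt (1 - ‖αp‖ ^ 2)) :
    ∀ ε : ℝ, 0 < ε → ε ≤ 1 →
      ∃ r : ℕ, ∃ M : ℝ, 0 < M ∧
        (∀ x : ℤ, ((r : ℤ) ≤ x ∨ x + 1 ≤ -(r : ℤ)) →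
          ∀ ξ : ℝ, ξ ∈ Set.Ioo 0 Real.pi → ε ≤ Real.sin ξ →
            ∀ ζ₁ ζ₂ : ℝ, ζ₁ ∈ Set.Ioo 0 Real.pi → ζ₂ ∈ Set.Ioo 0 Real.pi →
              ρ x * Real.cos ζ₁ = ρinf * Real.cos ξ →
              ρ (x + 1) * Real.cos ζ₂ = ρinf * Real.cos ξ →
              |ζ₂ - ζ₁| ≤ M * ε⁻¹ * ‖α (x + 1) - α x‖) ∧
        (∀ ξ : ℝ, ξ ∈ Set.Ioo 0 Real.pi → ε ≤ Real.sin ξ →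
          ∀ ζ : ℤ → ℝ,
            (∀ x : ℤ, (r : ℤ) ≤ |x| →
              ζ x ∈ Set.Ioo 0 Real.pi ∧ ρ x * Real.cos (ζ x) = ρinf * Real.cos ξ) →
            Summable (fun x : ℤ => if (r : ℤ) ≤ x then |ζ (x + 1) - ζ x| else 0) ∧
            Summable (fun x : ℤ => if x ≤ -(r : ℤ) - 1 then |ζ (x + 1) - ζ x| else 0)) := by
  intro ε hε hε1
  set a := ‖αp‖ with ha
  have ha2 : (0:ℝ) ≤ 1 - a ^ 2 := by nlinarith [h0p]
  have hP2eq : ρinf ^ 2 = 1 - a ^ 2 := by rw [hρinf]; exact Real.sq_sqrt ha2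
  have hPpos : 0 < ρinf := by rw [hρinf]; exact Real.sqrt_pos.mpr (by nlinarith [h0p])
  have hP1 : ρinf ≤ 1 := by
    rw [hρinf]; exact Real.sqrt_le_one.mpr (by nlinarith [norm_nonneg αp])
  set c := ρinf ^ 2 * ε ^ 2 / 2 with hc
  have hcpos : 0 < c := by positivity
  -- eventual closeness of ‖α x‖² to a² at ±∞
  have hev : ∀ᶠ y in nhds (a ^ 2), |y - a ^ 2| ≤ c := by
    filter_upwards [Metric.closedBall_mem_nhds (a ^ 2) hcpos] with y hy
    simpa [Metric.mem_closedBall, Real.dist_eq] using hy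
  have ht2 : Tendsto (fun x : ℤ => ‖α x‖ ^ 2) atTop (nhds (a ^ 2)) := htop.norm.pow 2
  have hb2 : Tendsto (fun x : ℤ => ‖α x‖ ^ 2) atBot (nhds (a ^ 2)) := by
    have h := hbot.norm.pow 2
    rwa [← hpm] at h
  obtain ⟨N₁, hN₁⟩ := eventually_atTop.mp (ht2.eventually hev)
  obtain ⟨N₂, hN₂⟩ := eventually_atBot.mp (hb2.eventually hev)
  set r : ℕ := (max N₁ (-N₂)).toNat with hr
  have hr1 : N₁ ≤ (r : ℤ) := le_trans (le_max_left _ _) (Int.self_le_toNat _)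
  have hr2 : -(r : ℤ) ≤ N₂ := by
    have := le_trans (le_max_right N₁ (-N₂)) (Int.self_le_toNat _)
    omega
  -- basic facts about ρ
  have hρsq : ∀ y : ℤ, ρ y ^ 2 = 1 - ‖α y‖ ^ 2 := fun y => by
    rw [hρ]; exact Real.sq_sqrt (by nlinarith [h02 y, h01 y])
  have hρpos : ∀ y : ℤ, 0 < ρ y := fun y => by
    rw [hρ]; exact Real.sqrt_pos.mpr (by nlinarith [h02 y, h01 y])
  have hρle : ∀ y : ℤ, ρ y ≤ 1 := fun y => by
    rw [hρ]; exact Real.sqrt_le_one.mpr (by nlinarith [norm_nonneg (α y)])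
  have key_cond : ∀ y : ℤ, ((r : ℤ) ≤ y ∨ y ≤ -(r : ℤ)) →
      ρinf ^ 2 * (1 - ε ^ 2 / 2) ≤ ρ y ^ 2 := by
    intro y hy
    have hnc : |‖α y‖ ^ 2 - a ^ 2| ≤ c := by
      rcases hy with h | h
      · exact hN₁ y (le_trans hr1 h)
      · exact hN₂ y (le_trans h hr2)
    rw [abs_le] at hnc
    have h1 := hρsq y
    nlinarith [hnc.1, hnc.2]
  set M : ℝ := 8 * Real.pi / ρinf ^ 4 with hM
  have hMpos : 0 < M := by positivity
  have hDb : ∀ x : ℤ, |ρ x ^ 2 - ρ (x + 1) ^ 2| ≤ 2 * ‖α (x + 1) - α x‖ := by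
    intro x
    have e : ρ x ^ 2 - ρ (x + 1) ^ 2 = ‖α (x + 1)‖ ^ 2 - ‖α x‖ ^ 2 := by
      rw [hρsq x, hρsq (x + 1)]; ring
    rw [e, abs_le]
    have h := abs_norm_sub_norm_le (α (x + 1)) (α x)
    rw [abs_le] at h
    constructor <;>
      nlinarith [h.1, h.2, h02 x, h02 (x + 1), norm_nonneg (α x), norm_nonneg (α (x + 1)),
        norm_nonneg (α (x + 1) - α x)]
  -- part 1
  have hpart1 : ∀ x : ℤ, ((r : ℤ) ≤ x ∨ x + 1 ≤ -(r : ℤ)) →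
      ∀ ξ : ℝ, ξ ∈ Set.Ioo 0 Real.pi → ε ≤ Real.sin ξ →
        ∀ ζ₁ ζ₂ : ℝ, ζ₁ ∈ Set.Ioo 0 Real.pi → ζ₂ ∈ Set.Ioo 0 Real.pi →
          ρ x * Real.cos ζ₁ = ρinf * Real.cos ξ →
          ρ (x + 1) * Real.cos ζ₂ = ρinf * Real.cos ξ →
          |ζ₂ - ζ₁| ≤ M * ε⁻¹ * ‖α (x + 1) - α x‖ := by
    intro x hx ξ hξ hsξ ζ₁ ζ₂ hζ₁ hζ₂ e1 e2
    have c1 : ρinf ^ 2 * (1 - ε ^ 2 / 2) ≤ ρ x ^ 2 := by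
      apply key_cond; rcases hx with h | h
      · exact Or.inl h
      · exact Or.inr (by omega)
    have c2 : ρinf ^ 2 * (1 - ε ^ 2 / 2) ≤ ρ (x + 1) ^ 2 := by
      apply key_cond; rcases hx with h | h
      · exact Or.inl (by omega)
      · exact Or.inr (by omega)
    have hk := aux_key ρinf ε ξ ζ₁ ζ₂ (ρ x) (ρ (x + 1)) hPpos hP1 hε hε1
      (hρle x) (hρle (x + 1)) c1 c2 (hρpos x) (hρpos (x + 1)) hξ hsξ hζ₁ hζ₂ e1 e2
    calc |ζ₂ - ζ₁| ≤ (4 * Real.pi / ρinf ^ 4) * ε⁻¹ * |ρ x ^ 2 - ρ (x + 1) ^ 2| := hk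
      _ ≤ (4 * Real.pi / ρinf ^ 4) * ε⁻¹ * (2 * ‖α (x + 1) - α x‖) :=
          mul_le_mul_of_nonneg_left (hDb x) (by positivity)
      _ = M * ε⁻¹ * ‖α (x + 1) - α x‖ := by rw [hM]; ring
  refine ⟨r, M, hMpos, hpart1, ?_⟩
  intro ξ hξ hsξ ζ hζ
  have hbound : ∀ (cond : ℤ → Prop) [DecidablePred cond],
      (∀ x : ℤ, cond x → ((r : ℤ) ≤ x ∨ x + 1 ≤ -(r : ℤ)) ∧ (r : ℤ) ≤ |x| ∧ (r : ℤ) ≤ |x + 1|) →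
      Summable (fun x : ℤ => if cond x then |ζ (x + 1) - ζ x| else 0) := by
    intro cond _ hcond
    refine Summable.of_nonneg_of_le ?_ ?_ (hsum.mul_left (M * ε⁻¹))
    · intro x
      split
      · exact abs_nonneg _
      · exact le_rfl
    · intro x
      by_cases h : cond x
      · rw [if_pos h]
        obtain ⟨hor, hx1, hx2⟩ := hcond x h
        obtain ⟨hmem1, heq1⟩ := hζ x hx1
        obtain ⟨hmem2, heq2⟩ := hζ (x + 1) hx2
        exact hpart1 x hor ξ hξ hsξ _ _ hmem1 hmem2 heq1 heq2
      · rw [if_neg h]; positivity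
  constructor
  · apply hbound
    intro x h
    refine ⟨Or.inl h, le_abs.mpr (Or.inl h), le_abs.mpr (Or.inl (by omega))⟩
  · apply hbound
    intro x h
    refine ⟨Or.inr (by omega), le_abs.mpr (Or.inr (by omega)), le_abs.mpr (Or.inr (by omega))⟩
end

section
/- Summability of the diagonalizer increments: let ε, ε' ∈ (0, 1], let ξ ∈ (0, π) with sin ξ ≥ ε, let λ ∈ (0, π) with cos λ = ρ_∞·cos ξ, let r ∈ ℕ, and let ζ : ℤ → ℝ be such that for all x with |x| ≥ r one has ζ(x) ∈ (0, π), ρ(x)·cos ζ(x) = cos λ and sin ζ(x) ≥ ε'. For |x| ≥ r define the 2×2 complex matrix P(x) = [[α(x), α(x)], [ρ(x)·e^{iζ(x)} − e^{iλ}, ρ(x)·e^{−iζ(x)} − e^{iλ}]]. Then det P(x) = −2i·α(x)·ρ(x)·sin ζ(x) ≠ 0 for all |x| ≥ r, and there exists M > 0 (which may depend on ε, ε', λ and α) such that ∑_{x ≥ r} ‖P(x+1)⁻¹·P(x) − I‖ + ∑_{x ≤ −r−1} ‖P(x+1)⁻¹·P(x) − I‖ ≤ M·∑_{x ∈ ℤ}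 |α(x+1) − α(x)| < ∞, where ‖·‖ is the operator norm on 2×2 complex matrices. -/
/-!
Under `ρ cos ζ = cos λ` the diagonalizer is `D(a, t) = [[a, a], [i(t - sin λ), -i(t + sin λ)]]`
with `t = ρ sin ζ`, so `det D = -2iat` and `t² + |a|² = sin² λ` is the same at every site.
In `P(x+1)⁻¹ P(x) - 1 = P(x+1)⁻¹ (P(x) - P(x+1))` the second factor is `O(|Δa| + |Δt|)`, and
`|Δt| = |Δ|a|²| / (t + t')` is `O(|Δa|)` once `t` is bounded below; by the adjugate formula the
first factor is `O(1 / (|a| t))`. As `|α|` has the same limit in `(0, 1)` at both ends, `|α|` and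
`ρ` are bounded below on `ℤ`, hence so is `t ≥ ρ ε'`.
-/

open Complex Filter

/-- The operator norm of a `2 × 2` complex matrix, viewed as a linear map on `ℂ²`. -/
noncomputable def matOpNorm (M : Matrix (Fin 2) (Fin 2) ℂ) : ℝ :=
  ‖LinearMap.toContinuousLinearMap M.mulVecLin‖

open scoped Matrix.Norms.Operator

namespace Matrix

theorem norm_le_sum_norm_entries {m n α : Type*} [Fintype m] [Fintype n]
    [SeminormedAddCommGroup α] (A : Matrix m n α) : ‖A‖ ≤ ∑ i, ∑ j, ‖A i j‖ := by
  rw [linfty_opNorm_def]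
  have hsum : ∑ i, ∑ j, ‖A i j‖ = ((∑ i, ∑ j, ‖A i j‖₊ : NNReal) : ℝ) := by push_cast; rfl
  rw [hsum, NNReal.coe_le_coe]
  exact Finset.sup_le fun i _ =>
    Finset.single_le_sum (f := fun i => ∑ j, ‖A i j‖₊) (fun _ _ => zero_le) (Finset.mem_univ i)

theorem norm_fin_two_le {α : Type*} [SeminormedAddCommGroup α] (M : Matrix (Fin 2) (Fin 2) α) :
    ‖M‖ ≤ ‖M 0 0‖ + ‖M 0 1‖ + ‖M 1 0‖ + ‖M 1 1‖ :=
  (norm_le_sum_norm_entries M).trans_eq <| by simp only [Fin.sum_univ_two]; ring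

theorem norm_inv_fin_two_le {𝕜 : Type*} [NormedField 𝕜] (M : Matrix (Fin 2) (Fin 2) 𝕜) :
    ‖M⁻¹‖ ≤ ‖M.det‖⁻¹ * (‖M 0 0‖ + ‖M 0 1‖ + ‖M 1 0‖ + ‖M 1 1‖) := by
  rw [inv_def, adjugate_fin_two, Ring.inverse_eq_inv', ← norm_inv]
  refine (norm_smul_le _ _).trans ?_
  gcongr
  refine (norm_fin_two_le _).trans_eq ?_
  simp only [of_apply, cons_val', cons_val_zero, cons_val_one, empty_val', cons_val_fin_one,
    norm_neg]
  ring

theorem norm_inv_mul_sub_one_le {n 𝕜 : Type*} [Fintype n] [DecidableEq n] [NormedField 𝕜]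
    (A B : Matrix n n 𝕜) (hB : IsUnit B.det) : ‖B⁻¹ * A - 1‖ ≤ ‖B⁻¹‖ * ‖A - B‖ := by
  rw [← nonsing_inv_mul B hB, ← Matrix.mul_sub]
  exact norm_mul_le _ _

end Matrix

open Matrix

theorem matOpNorm_eq_norm (M : Matrix (Fin 2) (Fin 2) ℂ) : matOpNorm M = ‖M‖ :=
  (linfty_opNorm_eq_opNorm M).symm

noncomputable def diagonalizer (lam : ℝ) (a : ℂ) (t : ℝ) : Matrix (Fin 2) (Fin 2) ℂ :=
  !![a, a; I * ((t - Real.sin lam : ℝ) : ℂ), -(I * ((t + Real.sin lam : ℝ) : ℂ))]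

theorem of_exp_eq_diagonalizer {lam ρ ζ : ℝ} (a : ℂ) (h : ρ * Real.cos ζ = Real.cos lam) :
    Matrix.of ![![a, a],
      ![(ρ : ℂ) * exp (I * (ζ : ℂ)) - exp (I * (lam : ℂ)),
        (ρ : ℂ) * exp (-(I * (ζ : ℂ))) - exp (I * (lam : ℂ))]] =
      diagonalizer lam a (ρ * Real.sin ζ) := by
  have hC : (ρ : ℂ) * Complex.cos ζ = Complex.cos lam := by exact_mod_cast h
  have hexp : ∀ θ : ℂ, exp (I * θ) = Complex.cos θ + Complex.sin θ * I := fun θ => by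
    rw [mul_comm, exp_mul_I]
  rw [diagonalizer, ← mul_neg]
  simp only [hexp, Complex.cos_neg, Complex.sin_neg]
  ext i j
  fin_cases i <;> fin_cases j <;> simp <;> linear_combination hC

theorem det_diagonalizer (lam : ℝ) (a : ℂ) (t : ℝ) :
    (diagonalizer lam a t).det = -2 * I * a * t := by
  simp [diagonalizer, det_fin_two_of]
  ring

theorem norm_diagonalizer_inv_le {lam t : ℝ} {a : ℂ} (ha : ‖a‖ ≤ 1) (ht : |t| ≤ 1) :
    ‖(diagonalizer lam a t)⁻¹‖ ≤ 3 / (‖a‖ * |t|) := by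
  have hsin := Real.abs_sin_le_one lam
  have hsub : |t - Real.sin lam| ≤ 2 := (abs_sub _ _).trans (by linarith)
  have hadd : |t + Real.sin lam| ≤ 2 := (abs_add_le _ _).trans (by linarith)
  refine (norm_inv_fin_two_le _).trans ?_
  rw [det_diagonalizer]
  simp only [diagonalizer, of_apply, cons_val', cons_val_zero, cons_val_one, cons_val_fin_one,
    norm_neg, norm_mul, norm_I, norm_ofNat, norm_real, Real.norm_eq_abs, one_mul, mul_one]
  calc _ ≤ (2 * ‖a‖ * |t|)⁻¹ * 6 := by gcongr; linarith
    _ = 3 / (‖a‖ * |t|) := by ring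

theorem norm_diagonalizer_sub_le (lam t t' : ℝ) (a a' : ℂ) :
    ‖diagonalizer lam a t - diagonalizer lam a' t'‖ ≤ 2 * (‖a - a'‖ + |t - t'|) := by
  have hsub : diagonalizer lam a t - diagonalizer lam a' t' =
      !![a - a', a - a'; I * ((t - t' : ℝ) : ℂ), -(I * ((t - t' : ℝ) : ℂ))] := by
    ext i j
    fin_cases i <;> fin_cases j <;> simp [diagonalizer] <;> ring
  rw [hsub]
  refine (norm_fin_two_le _).trans_eq ?_
  simp only [of_apply, cons_val', cons_val_zero, cons_val_one, cons_val_fin_one, norm_neg, norm_mul,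
    norm_I, one_mul, norm_real, Real.norm_eq_abs]
  ring

theorem norm_diagonalizer_inv_mul_sub_one_le {lam t t' : ℝ} {a a' : ℂ} (ha' : a' ≠ 0)
    (ha'1 : ‖a'‖ ≤ 1) (ht' : t' ≠ 0) (ht'1 : |t'| ≤ 1) :
    ‖(diagonalizer lam a' t')⁻¹ * diagonalizer lam a t - 1‖ ≤
      6 / (‖a'‖ * |t'|) * (‖a - a'‖ + |t - t'|) := by
  have hdet : IsUnit (diagonalizer lam a' t').det := by
    rw [det_diagonalizer, isUnit_iff_ne_zero]
    simp [ha', ht', I_ne_zero]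
  calc _ ≤ 3 / (‖a'‖ * |t'|) * (2 * (‖a - a'‖ + |t - t'|)) :=
        (norm_inv_mul_sub_one_le _ _ hdet).trans <| by
          gcongr
          exacts [norm_diagonalizer_inv_le ha'1 ht'1, norm_diagonalizer_sub_le ..]
    _ = _ := by ring

theorem sq_mul_sin_of_mul_cos_eq {ρ ζ c : ℝ} (h : ρ * Real.cos ζ = c) :
    (ρ * Real.sin ζ) ^ 2 = ρ ^ 2 - c ^ 2 := by
  rw [← h]
  linear_combination ρ ^ 2 * Real.sin_sq_add_cos_sq ζ

theorem abs_sub_le_abs_sq_sub_sq_div {t t' m : ℝ} (hm : 0 < m) (ht : m ≤ t) (ht' : m ≤ t') :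
    |t - t'| ≤ |t ^ 2 - t' ^ 2| / (2 * m) := by
  rw [le_div_iff₀ (by positivity), sq_sub_sq, abs_mul, abs_of_pos (by linarith : 0 < t + t')]
  nlinarith [abs_nonneg (t - t')]

theorem abs_sq_sub_sq_le {u v : ℝ} (hu0 : 0 ≤ u) (hu1 : u ≤ 1) (hv0 : 0 ≤ v) (hv1 : v ≤ 1) :
    |u ^ 2 - v ^ 2| ≤ 2 * |u - v| := by
  rw [sq_sub_sq, abs_mul, abs_of_nonneg (by linarith : 0 ≤ u + v)]
  nlinarith [abs_nonneg (u - v)]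

theorem norm_diagonalizer_inv_mul_sub_one_le_of_sq_add_sq_eq {lam t t' c m : ℝ} {a a' : ℂ}
    (hc : 0 < c) (hm : 0 < m) (ha' : c ≤ ‖a'‖) (ht : m ≤ t) (ht' : m ≤ t')
    (hsq : t ^ 2 + ‖a‖ ^ 2 = t' ^ 2 + ‖a'‖ ^ 2) (hle : t' ^ 2 + ‖a'‖ ^ 2 ≤ 1) :
    ‖(diagonalizer lam a' t')⁻¹ * diagonalizer lam a t - 1‖ ≤
      6 / (c * m) * (1 + 1 / m) * ‖a' - a‖ := by
  have ha1 : ‖a‖ ≤ 1 := (pow_le_one_iff_of_nonneg (norm_nonneg a) two_ne_zero).mp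
    (by nlinarith [sq_nonneg t])
  have ha'1 : ‖a'‖ ≤ 1 := (pow_le_one_iff_of_nonneg (norm_nonneg a') two_ne_zero).mp
    (by nlinarith [sq_nonneg t'])
  have ht'0 : 0 < t' := hm.trans_le ht'
  have ht'1 : |t'| ≤ 1 := (sq_le_one_iff_abs_le_one t').mp (by nlinarith [norm_nonneg a'])
  have htt : |t - t'| ≤ ‖a' - a‖ / m :=
    calc |t - t'| ≤ |‖a'‖ ^ 2 - ‖a‖ ^ 2| / (2 * m) :=
          (abs_sub_le_abs_sq_sub_sq_div hm ht ht').trans_eq (by congr 2; linarith)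
      _ ≤ 2 * ‖a' - a‖ / (2 * m) := by
        gcongr
        exact (abs_sq_sub_sq_le (norm_nonneg _) ha'1 (norm_nonneg _) ha1).trans
          (by gcongr; exact abs_norm_sub_norm_le a' a)
      _ = ‖a' - a‖ / m := by field_simp
  refine (norm_diagonalizer_inv_mul_sub_one_le (norm_pos_iff.mp (hc.trans_le ha')) ha'1 ht'0.ne'
    ht'1).trans ?_
  rw [abs_of_pos ht'0, norm_sub_rev a a']
  calc 6 / (‖a'‖ * t') * (‖a' - a‖ + |t - t'|) ≤ 6 / (c * m) * (‖a' - a‖ + ‖a' - a‖ / m) := by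
        gcongr
    _ = 6 / (c * m) * (1 + 1 / m) * ‖a' - a‖ := by ring

theorem exists_pos_forall_le_of_tendsto_cofinite {ι : Type*} {f : ι → ℝ} {L : ℝ}
    (hf : ∀ i, 0 < f i) (hL : 0 < L) (h : Tendsto f cofinite (nhds L)) :
    ∃ c, 0 < c ∧ ∀ i, c ≤ f i := by
  obtain ⟨B, hB⟩ := (h.inv₀ hL.ne').bddAbove_range_of_cofinite
  refine ⟨(max B 1)⁻¹, by positivity, fun i => inv_le_of_inv_le₀ (hf i) ?_⟩
  exact (hB ⟨i, rfl⟩).trans (le_max_left B 1)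

theorem exists_pos_forall_le_and_le_sqrt_one_sub_sq {ι : Type*} {u : ι → ℝ} {L : ℝ}
    (hu0 : ∀ i, 0 < u i) (hu1 : ∀ i, u i < 1) (hL0 : 0 < L) (hL1 : L < 1)
    (h : Tendsto u cofinite (nhds L)) :
    ∃ c, 0 < c ∧ ∀ i, c ≤ u i ∧ c ≤ Real.sqrt (1 - u i ^ 2) := by
  obtain ⟨c₁, hc₁, hle₁⟩ := exists_pos_forall_le_of_tendsto_cofinite hu0 hL0 h
  obtain ⟨c₂, hc₂, hle₂⟩ := exists_pos_forall_le_of_tendsto_cofinite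
    (fun i => Real.sqrt_pos.mpr (by nlinarith [hu0 i, hu1 i]))
    (Real.sqrt_pos.mpr (by nlinarith)) ((h.pow 2).const_sub 1).sqrt
  exact ⟨min c₁ c₂, lt_min hc₁ hc₂,
    fun i => ⟨min_le_of_left_le (hle₁ i), min_le_of_right_le (hle₂ i)⟩⟩

theorem summable_ite_and_tsum_add_ite_le {β : Type*} {p q : β → Prop} [DecidablePred p]
    [DecidablePred q] {f g : β → ℝ} (hpq : ∀ x, p x → ¬ q x) (hf : ∀ x, 0 ≤ f x)
    (hg0 : ∀ x, 0 ≤ g x) (hg : Summable g) (hfg : ∀ x, p x ∨ q x → f x ≤ g x) :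
    Summable (fun x => if p x then f x else 0) ∧ Summable (fun x => if q x then f x else 0) ∧
      (∑' x, if p x then f x else 0) + (∑' x, if q x then f x else 0) ≤ ∑' x, g x := by
  have hp0 : ∀ x, 0 ≤ if p x then f x else 0 := fun x => by split_ifs <;> simp [hf]
  have hq0 : ∀ x, 0 ≤ if q x then f x else 0 := fun x => by split_ifs <;> simp [hf]
  have hle : ∀ x, (if p x then f x else 0) + (if q x then f x else 0) ≤ g x := by
    intro x
    by_cases hp : p x
    · simp [hp, hpq x hp, hfg x (Or.inl hp)]
    · by_cases hq : q x
      · simp [hp, hq, hfg x (Or.inr hq)]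
      · simp [hp, hq, hg0 x]
  have hps := hg.of_nonneg_of_le hp0 fun x => (le_add_of_nonneg_right (hq0 x)).trans (hle x)
  have hqs := hg.of_nonneg_of_le hq0 fun x => (le_add_of_nonneg_left (hp0 x)).trans (hle x)
  exact ⟨hps, hqs, (hps.tsum_add hqs).symm.trans_le (Summable.tsum_le_tsum hle (hps.add hqs) hg)⟩

theorem diagonalizer_increments_summable_general
    (α : ℤ → ℂ)
    (h01 : ∀ x : ℤ, 0 < ‖α x‖) (h02 : ∀ x : ℤ, ‖α x‖ < 1)
    (hsum : Summable fun x : ℤ => ‖α (x + 1) - α x‖)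
    (αp αm : ℂ)
    (htop : Tendsto α atTop (nhds αp))
    (hbot : Tendsto α atBot (nhds αm))
    (hpm : ‖αp‖ = ‖αm‖) (h0p : 0 < ‖αp‖) (h1p : ‖αp‖ < 1)
    (ρ : ℤ → ℝ) (hρ : ∀ x : ℤ, ρ x = Real.sqrt (1 - ‖α x‖ ^ 2))
    (ε' : ℝ) (hε'0 : 0 < ε')
    (lam : ℝ)
    (r : ℕ) (ζ : ℤ → ℝ)
    (hζ : ∀ x : ℤ, (r : ℤ) ≤ |x| →
      ζ x ∈ Set.Ioo 0 Real.pi ∧ ρ x * Real.cos (ζ x) = Real.cos lam ∧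
        ε' ≤ Real.sin (ζ x))
    (P : ℤ → Matrix (Fin 2) (Fin 2) ℂ)
    (hP : ∀ x : ℤ, (r : ℤ) ≤ |x| →
      P x = Matrix.of
        ![![α x, α x],
          ![(ρ x : ℂ) * Complex.exp (Complex.I * (ζ x : ℂ)) - Complex.exp (Complex.I * (lam : ℂ)),
            (ρ x : ℂ) * Complex.exp (-(Complex.I * (ζ x : ℂ))) - Complex.exp (Complex.I * (lam : ℂ))]]) :
    (∀ x : ℤ, (r : ℤ) ≤ |x| →
      (P x).det = -2 * Complex.I * α x * (ρ x : ℂ) * (Real.sin (ζ x) : ℂ) ∧ (P x).det ≠ 0) ∧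
    ∃ M : ℝ, 0 < M ∧
      Summable (fun x : ℤ => if (r : ℤ) ≤ x then matOpNorm ((P (x + 1))⁻¹ * P x - 1) else 0) ∧
      Summable (fun x : ℤ => if x ≤ -(r : ℤ) - 1 then matOpNorm ((P (x + 1))⁻¹ * P x - 1) else 0) ∧
      (∑' x : ℤ, if (r : ℤ) ≤ x then matOpNorm ((P (x + 1))⁻¹ * P x - 1) else 0)
          + (∑' x : ℤ, if x ≤ -(r : ℤ) - 1 then matOpNorm ((P (x + 1))⁻¹ * P x - 1) else 0)
        ≤ M * ∑' x : ℤ, ‖α (x + 1) - α x‖ := by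
  obtain ⟨c, hc, hcα⟩ := exists_pos_forall_le_and_le_sqrt_one_sub_sq h01 h02 h0p h1p
    (Int.cofinite_eq ▸ (hpm ▸ hbot.norm).sup htop.norm)
  have hm : 0 < c * ε' := mul_pos hc hε'0
  have hPD : ∀ x : ℤ, (r : ℤ) ≤ |x| → P x = diagonalizer lam (α x) (ρ x * Real.sin (ζ x)) :=
    fun x hx => (hP x hx).trans (of_exp_eq_diagonalizer (α x) (hζ x hx).2.1)
  have ht : ∀ x : ℤ, (r : ℤ) ≤ |x| → c * ε' ≤ ρ x * Real.sin (ζ x) := fun x hx =>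
    mul_le_mul (hρ x ▸ (hcα x).2) (hζ x hx).2.2 hε'0.le (hc.trans_le (hρ x ▸ (hcα x).2)).le
  have hsq : ∀ x : ℤ, (r : ℤ) ≤ |x| →
      (ρ x * Real.sin (ζ x)) ^ 2 + ‖α x‖ ^ 2 = Real.sin lam ^ 2 := fun x hx => by
    rw [sq_mul_sin_of_mul_cos_eq (hζ x hx).2.1, hρ x,
      Real.sq_sqrt (by nlinarith [h02 x, norm_nonneg (α x)])]
    linarith [Real.sin_sq_add_cos_sq lam]
  have hdet : ∀ x : ℤ, (r : ℤ) ≤ |x| →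
      (P x).det = -2 * Complex.I * α x * (ρ x : ℂ) * (Real.sin (ζ x) : ℂ) ∧ (P x).det ≠ 0 := by
    intro x hx
    rw [hPD x hx, det_diagonalizer]
    refine ⟨by push_cast; ring, ?_⟩
    exact mul_ne_zero (mul_ne_zero (mul_ne_zero (by norm_num) I_ne_zero) (norm_pos_iff.mp (h01 x)))
      (ofReal_ne_zero.mpr (hm.trans_le (ht x hx)).ne')
  have hstep : ∀ x : ℤ, (r : ℤ) ≤ x ∨ x ≤ -(r : ℤ) - 1 → matOpNorm ((P (x + 1))⁻¹ * P x - 1) ≤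
      6 / (c * (c * ε')) * (1 + 1 / (c * ε')) * ‖α (x + 1) - α x‖ := by
    intro x hx
    obtain ⟨h0, h1⟩ : (r : ℤ) ≤ |x| ∧ (r : ℤ) ≤ |x + 1| := by simp only [le_abs]; omega
    rw [matOpNorm_eq_norm, hPD x h0, hPD (x + 1) h1]
    exact norm_diagonalizer_inv_mul_sub_one_le_of_sq_add_sq_eq hc hm (hcα _).1 (ht x h0) (ht _ h1)
      ((hsq x h0).trans (hsq _ h1).symm) ((hsq _ h1).trans_le (Real.sin_sq_le_one lam))
  obtain ⟨hs₁, hs₂, hle⟩ := summable_ite_and_tsum_add_ite_le (fun x (hx : (r : ℤ) ≤ x) => by omega)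
    (fun x => norm_nonneg _) (fun x => by positivity) (hsum.mul_left _) hstep
  exact ⟨hdet, _, by positivity, hs₁, hs₂, hle.trans_eq tsum_mul_left⟩

/-- Summability of the diagonalizer increments: the diagonalizers
`P(x) = [[α(x), α(x)], [ρ(x)e^{iζ(x)} − e^{iλ}, ρ(x)e^{−iζ(x)} − e^{iλ}]]`
are invertible near infinity and `∑ ‖P(x+1)⁻¹ P(x) − 1‖` is controlled by
`∑ |α(x+1) − α(x)| < ∞`. -/
theorem diagonalizer_increments_summable
    (α : ℤ → ℂ)
    (h01 : ∀ x : ℤ, 0 < ‖α x‖) (h02 : ∀ x : ℤ, ‖α x‖ < 1)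
    (hsum : Summable fun x : ℤ => ‖α (x + 1) - α x‖)
    (αp αm : ℂ)
    (htop : Tendsto α atTop (nhds αp))
    (hbot : Tendsto α atBot (nhds αm))
    (hpm : ‖αp‖ = ‖αm‖) (h0p : 0 < ‖αp‖) (h1p : ‖αp‖ < 1)
    (ρ : ℤ → ℝ) (hρ : ∀ x : ℤ, ρ x = Real.sqrt (1 - ‖α x‖ ^ 2))
    (ρinf : ℝ) (hρinf : ρinf = Real.sqrt (1 - ‖αp‖ ^ 2))
    (ε ε' : ℝ) (hε0 : 0 < ε) (hε1 : ε ≤ 1) (hε'0 : 0 < ε') (hε'1 : ε' ≤ 1)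
    (ξ : ℝ) (hξ : ξ ∈ Set.Ioo 0 Real.pi) (hsin : ε ≤ Real.sin ξ)
    (lam : ℝ) (hlamI : lam ∈ Set.Ioo 0 Real.pi)
    (hlam : Real.cos lam = ρinf * Real.cos ξ)
    (r : ℕ) (ζ : ℤ → ℝ)
    (hζ : ∀ x : ℤ, (r : ℤ) ≤ |x| →
      ζ x ∈ Set.Ioo 0 Real.pi ∧ ρ x * Real.cos (ζ x) = Real.cos lam ∧
        ε' ≤ Real.sin (ζ x))
    (P : ℤ → Matrix (Fin 2) (Fin 2) ℂ)
    (hP : ∀ x : ℤ, (r : ℤ) ≤ |x| →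
      P x = Matrix.of
        ![![α x, α x],
          ![(ρ x : ℂ) * Complex.exp (Complex.I * (ζ x : ℂ)) - Complex.exp (Complex.I * (lam : ℂ)),
            (ρ x : ℂ) * Complex.exp (-(Complex.I * (ζ x : ℂ))) - Complex.exp (Complex.I * (lam : ℂ))]]) :
    (∀ x : ℤ, (r : ℤ) ≤ |x| →
      (P x).det = -2 * Complex.I * α x * (ρ x : ℂ) * (Real.sin (ζ x) : ℂ) ∧ (P x).det ≠ 0) ∧
    ∃ M : ℝ, 0 < M ∧
      Summable (fun x : ℤ => if (r : ℤ) ≤ x then matOpNorm ((P (x + 1))⁻¹ * P x - 1) else 0) ∧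
      Summable (fun x : ℤ => if x ≤ -(r : ℤ) - 1 then matOpNorm ((P (x + 1))⁻¹ * P x - 1) else 0) ∧
      (∑' x : ℤ, if (r : ℤ) ≤ x then matOpNorm ((P (x + 1))⁻¹ * P x - 1) else 0)
          + (∑' x : ℤ, if x ≤ -(r : ℤ) - 1 then matOpNorm ((P (x + 1))⁻¹ * P x - 1) else 0)
        ≤ M * ∑' x : ℤ, ‖α (x + 1) - α x‖ :=
  diagonalizer_increments_summable_general α h01 h02 hsum αp αm htop hbot hpm h0p h1p ρ hρ ε' hε'0
    lam r ζ hζ P hP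
end

section
/- Solvability of the Duhamel fixed-point equation by Neumann series: let x₀ ∈ ℤ, let ζ : ℤ → ℂ satisfy Im ζ(w) ≥ 0 for all w ∈ ℤ, and let V : ℤ → Mat₂(ℂ) satisfy ∑_{y ≥ x₀} ‖V(y)‖ ≤ 1/2 (operator norm). For x ≤ y set Φ(x,y) = diag(1, exp(2i·∑_{w=x}^{y} ζ(w))). Then there exists ψ : ℤ → ℂ² such that: (a) ‖ψ(x)‖ ≤ 2 for all x ≥ x₀; (b) for every x ≥ x₀ the series ∑_{y ≥ x} Φ(x,y)·V(y)·ψ(y) converges absolutely and ψ(x) = (1, 0) − ∑_{y ≥ x} Φ(x,y)·V(y)·ψ(y); (c) ψ(x+1) = (diag(1, e^{−2i·ζ(x)}) + V(x))·ψ(x) for all x ≥ x₀; (d) ψ(x) → (1, 0) as x → +∞. -/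
open Complex Filter Matrix

/-!
Write `K f (x) = Σ_{y ≥ x} Φ(x,y) V(y) f(y)`. Since `Im ζ ≥ 0`, every `Φ(x,y)` is a contraction of
`ℂ²` with the sup norm, so on bounded sequences `‖K‖ ≤ Σ ‖V‖ ≤ 1/2` and `f ↦ (1,0) - K f` is a
contraction; its fixed point (the sum of the Neumann series) has `‖ψ‖ ≤ 1 / (1 - 1/2) = 2`.
Truncating `V` to `y ≥ x₀` makes the Duhamel equation hold at every `x ∈ ℤ`. The factorisation
`Φ(x,y) = diag(1, e^{2iζ(x)}) Φ(x+1,y)` peels the term `y = x` off the sum and turns the equation at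
`x` and `x + 1` into the recursion, and dominated convergence sends the tails `K ψ (x)` to `0`.
-/

open scoped Topology NNReal BoundedContinuousFunction

theorem norm_mulVec_le_matOpNorm (M : Matrix (Fin 2) (Fin 2) ℂ) (v : Fin 2 → ℂ) :
    ‖M *ᵥ v‖ ≤ matOpNorm M * ‖v‖ :=
  (LinearMap.toContinuousLinearMap M.mulVecLin).le_opNorm v

theorem matOpNorm_zero : matOpNorm 0 = 0 := by
  simp [matOpNorm]

theorem norm_diagonal_mulVec_le {n : Type*} [Fintype n] [DecidableEq n] {d : n → ℂ}
    (hd : ∀ i, ‖d i‖ ≤ 1) (v : n → ℂ) : ‖diagonal d *ᵥ v‖ ≤ ‖v‖ := by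
  refine (pi_norm_le_iff_of_nonneg (norm_nonneg v)).2 fun i => ?_
  rw [mulVec_diagonal, norm_mul]
  exact (mul_le_of_le_one_left (norm_nonneg _) (hd i)).trans (norm_le_pi_norm v i)

theorem diagonal_one_mulVec_one_zero (c : ℂ) : diagonal ![1, c] *ᵥ ![1, 0] = ![1, 0] := by
  ext i; fin_cases i <;> simp [mulVec_diagonal]

theorem diagonal_exp_neg_mul_diagonal_exp (a : ℂ) :
    diagonal ![1, exp (-a)] * diagonal ![1, exp a] = 1 := by
  rw [diagonal_mul_diagonal, ← diagonal_one]
  congr 1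
  ext i; fin_cases i <;> simp [← exp_add]

theorem norm_exp_two_I_mul_le_one {z : ℂ} (hz : 0 ≤ z.im) : ‖exp (2 * I * z)‖ ≤ 1 := by
  rw [norm_exp, Real.exp_le_one_iff]
  simpa using hz

noncomputable def phaseMatrix (ζ : ℤ → ℂ) (x y : ℤ) : Matrix (Fin 2) (Fin 2) ℂ :=
  diagonal ![1, exp (2 * I * ∑ w ∈ Finset.Icc x y, ζ w)]

theorem norm_phaseMatrix_mulVec_le {ζ : ℤ → ℂ} (hζ : ∀ w, 0 ≤ (ζ w).im) (x y : ℤ)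
    (v : Fin 2 → ℂ) : ‖phaseMatrix ζ x y *ᵥ v‖ ≤ ‖v‖ := by
  refine norm_diagonal_mulVec_le (fun i => ?_) v
  fin_cases i
  · simp
  · exact norm_exp_two_I_mul_le_one <| by
      simpa only [im_sum] using Finset.sum_nonneg fun w _ => hζ w

theorem phaseMatrix_eq_diagonal_mul (ζ : ℤ → ℂ) {x y : ℤ} (h : x ≤ y) :
    phaseMatrix ζ x y = diagonal ![1, exp (2 * I * ζ x)] * phaseMatrix ζ (x + 1) y := by
  rw [phaseMatrix, phaseMatrix, diagonal_mul_diagonal, Finset.Icc_eq_cons_Ioc h,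
    Finset.sum_cons, ← Finset.Icc_add_one_left_eq_Ioc]
  congr 1
  ext i; fin_cases i <;> simp [mul_add, exp_add]

theorem phaseMatrix_succ_self (ζ : ℤ → ℂ) (x : ℤ) : phaseMatrix ζ (x + 1) x = 1 := by
  rw [phaseMatrix, ← diagonal_one]
  congr 1
  ext i; fin_cases i <;> simp

section DuhamelSum

noncomputable def duhamelSum (ζ : ℤ → ℂ) (u : ℤ → Fin 2 → ℂ) (x : ℤ) : Fin 2 → ℂ :=
  ∑' y, if x ≤ y then phaseMatrix ζ x y *ᵥ u y else 0

theorem duhamelSum_congr {ζ : ℤ → ℂ} {u v : ℤ → Fin 2 → ℂ} {x : ℤ}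
    (h : ∀ y, x ≤ y → u y = v y) : duhamelSum ζ u x = duhamelSum ζ v x :=
  tsum_congr fun y => by
    split_ifs with hy
    · rw [h y hy]
    · rfl

variable {ζ : ℤ → ℂ} (hζ : ∀ w, 0 ≤ (ζ w).im) {u : ℤ → Fin 2 → ℂ}
  (hu : Summable fun y => ‖u y‖)
include hζ

theorem norm_duhamelTerm_le (x y : ℤ) :
    ‖if x ≤ y then phaseMatrix ζ x y *ᵥ u y else 0‖ ≤ ‖u y‖ := by
  split_ifs
  · exact norm_phaseMatrix_mulVec_le hζ x y (u y)
  · simp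

include hu

theorem summable_duhamelTerm (x : ℤ) :
    Summable fun y => if x ≤ y then phaseMatrix ζ x y *ᵥ u y else 0 :=
  hu.of_norm_bounded (norm_duhamelTerm_le hζ x)

theorem summable_norm_duhamelTerm (x : ℤ) :
    Summable fun y => if x ≤ y then ‖phaseMatrix ζ x y *ᵥ u y‖ else 0 := by
  simpa only [apply_ite (‖·‖), norm_zero] using (summable_duhamelTerm hζ hu x).norm

theorem norm_duhamelSum_le (x : ℤ) : ‖duhamelSum ζ u x‖ ≤ ∑' y, ‖u y‖ :=
  tsum_of_norm_bounded hu.hasSum (norm_duhamelTerm_le hζ x)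

theorem duhamelSum_sub {v : ℤ → Fin 2 → ℂ} (hv : Summable fun y => ‖v y‖) (x : ℤ) :
    duhamelSum ζ (u - v) x = duhamelSum ζ u x - duhamelSum ζ v x := by
  rw [duhamelSum, duhamelSum, duhamelSum,
    ← (summable_duhamelTerm hζ hu x).tsum_sub (summable_duhamelTerm hζ hv x)]
  exact tsum_congr fun y => by split_ifs <;> simp [mulVec_sub]

theorem duhamelSum_eq_diagonal_mulVec (x : ℤ) :
    duhamelSum ζ u x = diagonal ![1, exp (2 * I * ζ x)] *ᵥ (u x + duhamelSum ζ u (x + 1)) := by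
  set D := diagonal ![1, exp (2 * I * ζ x)]
  have hterm : ∀ y, (if x ≤ y then phaseMatrix ζ x y *ᵥ u y else 0)
      = (if y = x then D *ᵥ u x else 0)
        + D *ᵥ (if x + 1 ≤ y then phaseMatrix ζ (x + 1) y *ᵥ u y else 0) := by
    intro y
    rcases lt_trichotomy y x with hy | rfl | hy
    · simp [hy.ne, hy.not_ge, (hy.trans (lt_add_one x)).not_ge]
    · simp [phaseMatrix_eq_diagonal_mul ζ le_rfl, phaseMatrix_succ_self, D]
    · rw [if_pos hy.le, if_neg hy.ne', if_pos (Int.add_one_le_iff.2 hy), zero_add,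
        phaseMatrix_eq_diagonal_mul ζ hy.le, ← mulVec_mulVec]
  have hD : Summable fun y => D *ᵥ (if x + 1 ≤ y then phaseMatrix ζ (x + 1) y *ᵥ u y else 0) :=
    (summable_duhamelTerm hζ hu (x + 1)).mapL (LinearMap.toContinuousLinearMap D.mulVecLin)
  rw [duhamelSum, tsum_congr hterm, Summable.tsum_add ⟨_, hasSum_ite_eq x _⟩ hD, tsum_ite_eq,
    mulVec_add]
  congr 1
  exact ((LinearMap.toContinuousLinearMap D.mulVecLin).map_tsum
    (summable_duhamelTerm hζ hu (x + 1))).symm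

theorem tendsto_duhamelSum_atTop : Tendsto (duhamelSum ζ u) atTop (𝓝 0) := by
  have hlim : ∀ y, Tendsto (fun x => if x ≤ y then phaseMatrix ζ x y *ᵥ u y else 0) atTop (𝓝 0) :=
    fun y => tendsto_const_nhds.congr' <| (eventually_gt_atTop y).mono fun x hx => by
      simp [hx.not_ge]
  have h := tendsto_tsum_of_dominated_convergence hu hlim
    (Eventually.of_forall fun x => norm_duhamelTerm_le hζ x)
  rwa [tsum_zero] at h

theorem duhamel_recursion {ψ : ℤ → Fin 2 → ℂ} (hψ : ∀ x, ψ x = ![1, 0] - duhamelSum ζ u x)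
    (x : ℤ) : ψ (x + 1) = diagonal ![1, exp (-(2 * I * ζ x))] *ᵥ ψ x + u x := by
  have hnext : duhamelSum ζ u (x + 1) = ![1, 0] - ψ (x + 1) := by
    rw [hψ (x + 1)]; abel
  rw [hψ x, duhamelSum_eq_diagonal_mulVec hζ hu, hnext, mulVec_sub, mulVec_mulVec,
    diagonal_exp_neg_mul_diagonal_exp, one_mulVec, diagonal_one_mulVec_one_zero]
  abel

end DuhamelSum

section FixedPoint

variable {W : ℤ → Matrix (Fin 2) (Fin 2) ℂ} (hW : Summable fun y => matOpNorm (W y))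
include hW

theorem summable_norm_mulVec {f : ℤ → Fin 2 → ℂ} {C : ℝ} (hf : ∀ y, ‖f y‖ ≤ C) :
    Summable fun y => ‖W y *ᵥ f y‖ :=
  (hW.mul_right C).of_nonneg_of_le (fun _ => norm_nonneg _) fun y =>
    (norm_mulVec_le_matOpNorm _ _).trans (mul_le_mul_of_nonneg_left (hf y) (norm_nonneg _))

theorem tsum_norm_mulVec_le {f : ℤ → Fin 2 → ℂ} {C : ℝ} (hf : ∀ y, ‖f y‖ ≤ C) :
    ∑' y, ‖W y *ᵥ f y‖ ≤ (∑' y, matOpNorm (W y)) * C := by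
  rw [← tsum_mul_right]
  exact (summable_norm_mulVec hW hf).tsum_le_tsum
    (fun y => (norm_mulVec_le_matOpNorm _ _).trans
      (mul_le_mul_of_nonneg_left (hf y) (norm_nonneg _))) (hW.mul_right C)

variable {ζ : ℤ → ℂ} (hζ : ∀ w, 0 ≤ (ζ w).im)
include hζ

theorem norm_sub_duhamelSum_le {f : ℤ → Fin 2 → ℂ} {C : ℝ} (hf : ∀ y, ‖f y‖ ≤ C) (x : ℤ) :
    ‖![1, 0] - duhamelSum ζ (fun y => W y *ᵥ f y) x‖ ≤ 1 + (∑' y, matOpNorm (W y)) * C := by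
  have he : ‖(![1, 0] : Fin 2 → ℂ)‖ ≤ 1 :=
    (pi_norm_le_iff_of_nonneg zero_le_one).2 fun i => by fin_cases i <;> simp
  grw [norm_sub_le, he, norm_duhamelSum_le hζ (summable_norm_mulVec hW hf),
    tsum_norm_mulVec_le hW hf]

noncomputable def duhamelMap (f : ℤ →ᵇ (Fin 2 → ℂ)) : ℤ →ᵇ (Fin 2 → ℂ) :=
  .ofNormedAddCommGroupDiscrete (fun x => ![1, 0] - duhamelSum ζ (fun y => W y *ᵥ f y) x)
    (1 + (∑' y, matOpNorm (W y)) * ‖f‖) (norm_sub_duhamelSum_le hW hζ f.norm_coe_le_norm)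

theorem duhamelMap_apply (f : ℤ →ᵇ (Fin 2 → ℂ)) (x : ℤ) :
    duhamelMap hW hζ f x = ![1, 0] - duhamelSum ζ (fun y => W y *ᵥ f y) x :=
  rfl

theorem norm_duhamelMap_le (f : ℤ →ᵇ (Fin 2 → ℂ)) :
    ‖duhamelMap hW hζ f‖ ≤ 1 + (∑' y, matOpNorm (W y)) * ‖f‖ :=
  (BoundedContinuousFunction.norm_le
    (add_nonneg zero_le_one (mul_nonneg (tsum_nonneg fun _ => norm_nonneg _) (norm_nonneg f)))).2
    (norm_sub_duhamelSum_le hW hζ f.norm_coe_le_norm)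

theorem duhamelMap_contractingWith {q : ℝ≥0} (hq : q < 1) (hWq : ∑' y, matOpNorm (W y) ≤ q) :
    ContractingWith q (duhamelMap hW hζ) := by
  refine ⟨hq, LipschitzWith.of_dist_le_mul fun f g => ?_⟩
  refine (BoundedContinuousFunction.dist_le (by positivity)).2 fun x => ?_
  have hfg : ∀ y, ‖(f - g) y‖ ≤ dist f g := fun y => by
    simpa [dist_eq_norm] using BoundedContinuousFunction.dist_coe_le_dist (f := f) (g := g) y
  have hsub : (fun y => W y *ᵥ f y) - (fun y => W y *ᵥ g y) = fun y => W y *ᵥ (f - g) y := by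
    ext y : 1; simp [mulVec_sub]
  calc dist (duhamelMap hW hζ f x) (duhamelMap hW hζ g x)
      = ‖duhamelSum ζ (fun y => W y *ᵥ (f - g) y) x‖ := by
        rw [dist_eq_norm, duhamelMap_apply, duhamelMap_apply, sub_sub_sub_cancel_left, ← norm_neg,
          neg_sub, ← duhamelSum_sub hζ (summable_norm_mulVec hW f.norm_coe_le_norm)
            (summable_norm_mulVec hW g.norm_coe_le_norm), hsub]
    _ ≤ (∑' y, matOpNorm (W y)) * dist f g :=
        (norm_duhamelSum_le hζ (summable_norm_mulVec hW hfg) x).trans (tsum_norm_mulVec_le hW hfg)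
    _ ≤ q * dist f g := by gcongr

theorem exists_duhamel_fixedPoint {q : ℝ≥0} (hq : q < 1) (hWq : ∑' y, matOpNorm (W y) ≤ q) :
    ∃ ψ : ℤ →ᵇ (Fin 2 → ℂ),
      ‖ψ‖ ≤ (1 - (q : ℝ))⁻¹ ∧ ∀ x, ψ x = ![1, 0] - duhamelSum ζ (fun y => W y *ᵥ ψ y) x := by
  have hT := duhamelMap_contractingWith hW hζ hq hWq
  set ψ := hT.fixedPoint
  have hfix : duhamelMap hW hζ ψ = ψ := hT.fixedPoint_isFixedPt
  refine ⟨ψ, ?_, fun x => by rw [← duhamelMap_apply hW hζ, hfix]⟩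
  have hq' : (q : ℝ) < 1 := hq
  have h := norm_duhamelMap_le hW hζ ψ
  rw [hfix] at h
  rw [← one_div, le_div_iff₀ (sub_pos.2 hq')]
  nlinarith [norm_nonneg ψ]

end FixedPoint

/-- Solvability of the Duhamel fixed-point equation by Neumann series: given
`Im ζ ≥ 0` and `∑_{y ≥ x₀} ‖V(y)‖ ≤ 1/2`, there is a solution `ψ` of
`ψ(x+1) = (diag(1, e^{−2iζ(x)}) + V(x)) ψ(x)` on `x ≥ x₀` with `‖ψ(x)‖ ≤ 2`,
satisfying the Duhamel formula and `ψ(x) → (1,0)` as `x → +∞`. -/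
theorem duhamel_neumann_series
    (x₀ : ℤ) (ζ : ℤ → ℂ) (hζ : ∀ w : ℤ, 0 ≤ (ζ w).im)
    (V : ℤ → Matrix (Fin 2) (Fin 2) ℂ)
    (hVsum : Summable fun y : ℤ => if x₀ ≤ y then matOpNorm (V y) else 0)
    (hVle : (∑' y : ℤ, if x₀ ≤ y then matOpNorm (V y) else 0) ≤ 1 / 2) :
    ∃ ψ : ℤ → Fin 2 → ℂ,
      (∀ x : ℤ, x₀ ≤ x → ‖ψ x‖ ≤ 2) ∧
      (∀ x : ℤ, x₀ ≤ x →
        Summable (fun y : ℤ => if x ≤ y then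
            ‖(Matrix.diagonal
                ![1, Complex.exp (2 * Complex.I * ∑ w ∈ Finset.Icc x y, ζ w)]).mulVec
              ((V y).mulVec (ψ y))‖
          else 0) ∧
        ψ x = ![1, 0] - ∑' y : ℤ, (if x ≤ y then
            (Matrix.diagonal
                ![1, Complex.exp (2 * Complex.I * ∑ w ∈ Finset.Icc x y, ζ w)]).mulVec
              ((V y).mulVec (ψ y))
          else 0)) ∧
      (∀ x : ℤ, x₀ ≤ x →
        ψ (x + 1) = (Matrix.diagonal ![1, Complex.exp (-(2 * Complex.I * ζ x))] + V x).mulVec (ψ x)) ∧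
      Tendsto ψ atTop (nhds ![1, 0]) := by
  set W : ℤ → Matrix (Fin 2) (Fin 2) ℂ := fun y => if x₀ ≤ y then V y else 0
  have hWV : ∀ y, x₀ ≤ y → W y = V y := fun y hy => if_pos hy
  have hnorm : (fun y => matOpNorm (W y)) = fun y => if x₀ ≤ y then matOpNorm (V y) else 0 := by
    ext y; split_ifs with hy <;> simp [W, hy, matOpNorm_zero]
  have hWsum : Summable fun y => matOpNorm (W y) := hnorm ▸ hVsum
  obtain ⟨ψ, hψ2, hψ⟩ := exists_duhamel_fixedPoint hWsum hζ (q := 1 / 2)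
    (by norm_num) (by rw [hnorm]; exact_mod_cast hVle)
  have hψle : ∀ x, ‖ψ x‖ ≤ 2 := fun x =>
    (ψ.norm_coe_le_norm x).trans (by norm_num at hψ2 ⊢; linarith)
  have hu : Summable fun y => ‖W y *ᵥ ψ y‖ := summable_norm_mulVec hWsum hψle
  refine ⟨ψ, fun x _ => hψle x, fun x hx => ⟨?_, ?_⟩, fun x hx => ?_, ?_⟩
  · refine (summable_norm_duhamelTerm hζ hu x).congr fun y => ?_
    split_ifs with hy
    · rw [hWV y (hx.trans hy)]; rfl
    · rfl
  · exact (hψ x).trans (congrArg _ (duhamelSum_congr fun y hy => by rw [hWV y (hx.trans hy)]))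
  · rw [duhamel_recursion hζ hu hψ x, add_mulVec, hWV x hx]
  · have h := (tendsto_const_nhds (x := (![1, 0] : Fin 2 → ℂ))).sub (tendsto_duhamelSum_atTop hζ hu)
    rw [sub_zero] at h
    exact h.congr fun x => (hψ x).symm
end
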